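/- arXiv:math-ph/0312058 — 5 statements merged into one kernel-verified Lean document; each statement's English description precedes it below -/
import Mathlib

section
/- For every f, g, h in the ring A[w,w⁻¹] of Laurent polynomials over A, the Lax–Poisson bracket satisfies the Jacobi identity {f,{g,h}} + {g,{h,f}} + {h,{f,g}} = 0. -/
open LaurentPolynomial

/-- The derivation `d : A → A` extended coefficientwise to Laurent polynomials
(so that `d w = 0`). -/
noncomputable def dmap {A : Type*} [CommRing A] (d : A → A) (f : LaurentPolynomial A) :
    LaurentPolynomial A :=
  f.coeff.sum fun n a => C (d a) * T n

/-- The formal derivative `∂_w` on Laurent polynomials. -/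
noncomputable def wderiv {A : Type*} [CommRing A] (f : LaurentPolynomial A) :
    LaurentPolynomial A :=
  f.coeff.sum fun n a => C (n • a) * T (n - 1)

/-- The Lax–Poisson bracket `{f,g} = w·(∂_w f)·(d g) − w·(d f)·(∂_w g)`. -/
noncomputable def lax {A : Type*} [CommRing A] (d : A → A) (f g : LaurentPolynomial A) :
    LaurentPolynomial A :=
  T 1 * wderiv f * dmap d g - T 1 * dmap d f * wderiv g

/-!
The bracket is `{f, g} = E f · D g − D f · E g` for the two derivations `D = dmap d` and
`E = w ∂_w` of `A[w, w⁻¹]`. Any two commuting derivations of a commutative ring give a bracket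
of this shape satisfying the Jacobi identity: expanding by the Leibniz rule, the terms with
second derivatives cancel in pairs exactly when `D E = E D`, and the rest cancel by symmetry.
Both `D` and `E` act diagonally on monomials (`D (a wⁿ) = d a · wⁿ`, `E (a wⁿ) = n a · wⁿ`),
so they commute, and their Leibniz rules reduce to monomials by biadditivity.
-/

section CommutingDerivations

variable {R : Type*} [CommRing R]

def Derivation.pairBracket (D E : Derivation ℤ R R) (x y : R) : R :=
  E x * D y - D x * E y

theorem Derivation.pairBracket_jacobi (D E : Derivation ℤ R R) (hDE : ∀ x, D (E x) = E (D x))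
    (f g h : R) :
    D.pairBracket E f (D.pairBracket E g h) + D.pairBracket E g (D.pairBracket E h f) +
      D.pairBracket E h (D.pairBracket E f g) = 0 := by
  simp only [Derivation.pairBracket, map_sub, Derivation.leibniz, smul_eq_mul, hDE]
  ring

end CommutingDerivations

namespace LaurentPolynomial

variable {A : Type*} [CommRing A]

theorem C_mul_T_mul_C_mul_T (a b : A) (m n : ℤ) :
    C a * T m * (C b * T n) = C (a * b) * T (m + n) := by
  rw [map_mul, T_add]
  ring

theorem leibniz_of_leibniz_C_mul_T (D : A[T;T⁻¹] →+ A[T;T⁻¹])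
    (hD : ∀ (a b : A) (m n : ℤ),
      D (C a * T m * (C b * T n)) = C a * T m * D (C b * T n) + C b * T n * D (C a * T m))
    (f g : A[T;T⁻¹]) : D (f * g) = f * D g + g * D f := by
  induction f using LaurentPolynomial.induction_on' with
  | add p q hp hq => rw [add_mul, map_add, hp, hq, map_add]; ring
  | C_mul_T m a =>
    induction g using LaurentPolynomial.induction_on' with
    | add p q hp hq => rw [mul_add, map_add, hp, hq, map_add]; ring
    | C_mul_T n b => exact hD a b m n

noncomputable def derivationOfLeibnizCMulT (D : A[T;T⁻¹] →+ A[T;T⁻¹])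
    (hD : ∀ (a b : A) (m n : ℤ),
      D (C a * T m * (C b * T n)) = C a * T m * D (C b * T n) + C b * T n * D (C a * T m)) :
    Derivation ℤ A[T;T⁻¹] A[T;T⁻¹] :=
  Derivation.mk' D.toIntLinearMap fun f g => leibniz_of_leibniz_C_mul_T D hD f g

end LaurentPolynomial

section LaxBracket

variable {A : Type*} [CommRing A]

theorem dmap_add {d : A → A} (hd_add : ∀ a b : A, d (a + b) = d a + d b) (f g : A[T;T⁻¹]) :
    dmap d (f + g) = dmap d f + dmap d g := by
  have hd_zero : d 0 = 0 := map_zero (AddMonoidHom.mk' d hd_add)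
  rw [dmap, AddMonoidAlgebra.coeff_add,
    Finsupp.sum_add_index (by simp [hd_zero]) (by intros; simp [hd_add, add_mul])]
  rfl

theorem dmap_C_mul_T {d : A → A} (hd_add : ∀ a b : A, d (a + b) = d a + d b) (a : A) (n : ℤ) :
    dmap d (C a * T n) = C (d a) * T n := by
  have hd_zero : d 0 = 0 := map_zero (AddMonoidHom.mk' d hd_add)
  rw [← single_eq_C_mul_T, dmap, AddMonoidAlgebra.coeff_single,
    Finsupp.sum_single_index (by simp [hd_zero])]

theorem wderiv_add (f g : A[T;T⁻¹]) : wderiv (f + g) = wderiv f + wderiv g := by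
  rw [wderiv, AddMonoidAlgebra.coeff_add,
    Finsupp.sum_add_index (by simp) (by intros; simp [smul_add, add_mul])]
  rfl

theorem T_one_mul_wderiv_C_mul_T (a : A) (n : ℤ) :
    T 1 * wderiv (C a * T n) = C (n • a) * T n := by
  rw [← single_eq_C_mul_T, wderiv, AddMonoidAlgebra.coeff_single,
    Finsupp.sum_single_index (by simp), mul_left_comm, ← T_add, add_sub_cancel]

noncomputable def dmapDerivation {d : A → A} (hd_add : ∀ a b : A, d (a + b) = d a + d b)
    (hd_mul : ∀ a b : A, d (a * b) = a * d b + d a * b) : Derivation ℤ A[T;T⁻¹] A[T;T⁻¹] :=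
  derivationOfLeibnizCMulT (AddMonoidHom.mk' (dmap d) (dmap_add hd_add)) fun a b m n => by
    simp only [AddMonoidHom.mk'_apply]
    rw [C_mul_T_mul_C_mul_T, dmap_C_mul_T hd_add, dmap_C_mul_T hd_add, dmap_C_mul_T hd_add,
      C_mul_T_mul_C_mul_T, C_mul_T_mul_C_mul_T, add_comm n, hd_mul, map_add, add_mul, mul_comm b]

noncomputable def eulerDerivation : Derivation ℤ A[T;T⁻¹] A[T;T⁻¹] :=
  derivationOfLeibnizCMulT
    (AddMonoidHom.mk' (fun f => T 1 * wderiv f) fun f g => by rw [wderiv_add, mul_add])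
    fun a b m n => by
      simp only [AddMonoidHom.mk'_apply]
      rw [C_mul_T_mul_C_mul_T, T_one_mul_wderiv_C_mul_T, T_one_mul_wderiv_C_mul_T,
        T_one_mul_wderiv_C_mul_T, C_mul_T_mul_C_mul_T, C_mul_T_mul_C_mul_T, add_comm n, ← add_mul,
        ← map_add]
      congr 2
      simp only [zsmul_eq_mul, Int.cast_add]
      ring

theorem dmap_T_one_mul_wderiv {d : A → A} (hd_add : ∀ a b : A, d (a + b) = d a + d b)
    (f : A[T;T⁻¹]) : dmap d (T 1 * wderiv f) = T 1 * wderiv (dmap d f) := by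
  induction f using LaurentPolynomial.induction_on' with
  | add p q hp hq => rw [wderiv_add, mul_add, dmap_add hd_add, hp, hq, dmap_add hd_add,
      wderiv_add, mul_add]
  | C_mul_T n a =>
    have hd_zsmul : d (n • a) = n • d a := map_zsmul (AddMonoidHom.mk' d hd_add) n a
    rw [T_one_mul_wderiv_C_mul_T, dmap_C_mul_T hd_add, dmap_C_mul_T hd_add,
      T_one_mul_wderiv_C_mul_T, hd_zsmul]

theorem lax_eq_pairBracket {d : A → A} (hd_add : ∀ a b : A, d (a + b) = d a + d b)
    (hd_mul : ∀ a b : A, d (a * b) = a * d b + d a * b) (f g : A[T;T⁻¹]) :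
    lax d f g = (dmapDerivation hd_add hd_mul).pairBracket eulerDerivation f g := by
  change _ = T 1 * wderiv f * dmap d g - dmap d f * (T 1 * wderiv g)
  rw [lax]
  ring

end LaxBracket

/-- the Lax–Poisson bracket satisfies the Jacobi identity. -/
theorem lax_jacobi {A : Type*} [CommRing A] (d : A → A)
    (hd_add : ∀ a b : A, d (a + b) = d a + d b)
    (hd_mul : ∀ a b : A, d (a * b) = a * d b + d a * b)
    (f g h : LaurentPolynomial A) :
    lax d f (lax d g h) + lax d g (lax d h f) + lax d h (lax d f g) = 0 := by
  simp only [lax_eq_pairBracket hd_add hd_mul]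
  exact Derivation.pairBracket_jacobi _ _ (dmap_T_one_mul_wderiv hd_add) f g h
end

section
/- Let K be a field of characteristic zero with a derivation d : K → K, extended coefficientwise to the polynomial ring K[w] (with d(w) = 0), and let ′ denote the formal derivative d/dw. Let p, q ∈ K[w] with p monic of degree N ≥ 1 and q of degree N+1, and fix k ≥ 1. Let s ∈ K[w] be the quotient in the Euclidean division of q^k by p^k (so q^k = s·p^k + ρ with deg ρ < kN), and set H := s − (1/2)·s₀, where s₀ is the constant coefficient of s. Then the polynomial P := w·H′·(d(q)·p − q·d(p)) − w·d(H)·(q′·p − q·p′) has degree at most 2N+1. (Equivalently, for z = q/p the bracket {H, z} equals P/p² with deg P ≤ 2N+1, so the t_k-flows of the 2dToda hierarchy preserve the rational form of z.) -/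
/-!
Let `W f := p² {f, z}` for `z = q / p`, where `{f, g} = f' · d g − d f · g'` is the Jacobian of
the derivations `'` and `d`. Clearing denominators, `W` is a derivation of `K[w]` with
`W p = c p` and `W q = c q` for `c = {p, q}`, so applying it to `q^k = s p^k + r` gives
`W(s) p^k = k c r − W(r)`. Since `'` lowers and `d` does not raise the degree, `{f, g}` has
degree `< deg f + deg g`; as `deg r < kN`, the right-hand side has degree `< kN + 2N + 1`, hence
`deg W(s) ≤ 2N`. The constant `s₀/2` only adds `W(const)` of degree `≤ 2N`, and
`P = w · W(H)`.
-/

open Polynomial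

/-- The derivation `d : K → K` extended coefficientwise to `K[w]` (so `d w = 0`). -/
noncomputable def pmap {K : Type*} [CommRing K] (d : K → K) (f : Polynomial K) :
    Polynomial K :=
  f.sum fun n a => C (d a) * X ^ n

namespace Derivation

variable {R A : Type*} [CommRing R] [CommRing A] [Algebra R A]

def jacobian (D₁ D₂ : Derivation R A A) (f g : A) : A := D₁ f * D₂ g - D₂ f * D₁ g

/-- `f ↦ p² · jacobian D₁ D₂ f (q / p)`, with the denominator cleared. -/
def quotJacobian (D₁ D₂ : Derivation R A A) (p q : A) : Derivation R A A :=
  (D₂ q * p - q * D₂ p) • D₁ - (D₁ q * p - q * D₁ p) • D₂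

variable (D₁ D₂ : Derivation R A A) (p q : A)

theorem quotJacobian_apply (f : A) :
    quotJacobian D₁ D₂ p q f = p * jacobian D₁ D₂ f q - q * jacobian D₁ D₂ f p := by
  simp only [quotJacobian, jacobian, sub_apply, smul_apply, smul_eq_mul]
  ring

theorem quotJacobian_apply_denom : quotJacobian D₁ D₂ p q p = jacobian D₁ D₂ p q * p := by
  simp only [quotJacobian_apply, jacobian]; ring

theorem quotJacobian_apply_num : quotJacobian D₁ D₂ p q q = jacobian D₁ D₂ p q * q := by
  simp only [quotJacobian_apply, jacobian]; ring

variable {D : Derivation R A A}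

theorem map_pow_of_map_eq_mul {a c : A} (h : D a = c * a) (n : ℕ) :
    D (a ^ n) = n • (c * a ^ n) := by
  induction n with
  | zero => simp
  | succ n ih => rw [pow_succ, leibniz, ih, h, smul_eq_mul, smul_eq_mul]; ring

theorem map_mul_pow_of_pow_eq_mul_pow_add {p q s r c : A} {k : ℕ} (hp : D p = c * p)
    (hq : D q = c * q) (h : q ^ k = s * p ^ k + r) : D s * p ^ k = k • (c * r) - D r := by
  have hD := congrArg D h
  rw [map_pow_of_map_eq_mul hq, map_add, leibniz, map_pow_of_map_eq_mul hp, h, smul_eq_mul,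
    smul_eq_mul] at hD
  linear_combination -hD

end Derivation

namespace Polynomial

section Semiring
variable {K : Type*} [Semiring K]

theorem degree_mul_lt_of_lt_of_le {f g : K[X]} {a b : ℕ} (hf : f.degree < a)
    (hg : g.degree ≤ b) : (f * g).degree < (a + b : ℕ) := by
  rcases eq_or_ne g 0 with rfl | hg0
  · simp
  · rw [Nat.cast_add]
    exact (degree_mul_le f g).trans_lt
      (WithBot.add_lt_add_of_lt_of_le (degree_ne_bot.mpr hg0) hf hg)

theorem degree_derivative_lt_of_degree_le {f : K[X]} {n : ℕ} (hf : f.degree ≤ n) :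
    (derivative f).degree < n := by
  rcases eq_or_ne f 0 with rfl | hf0
  · simp
  · exact (degree_derivative_lt hf0).trans_le hf

end Semiring

variable {K R : Type*} [CommRing K] [CommRing R] [Algebra R K[X]]
  {D₁ D₂ : Derivation R K[X] K[X]}
  (hD₁ : ∀ (f : K[X]) (n : ℕ), f.degree ≤ n → (D₁ f).degree < n)
  (hD₂ : ∀ (f : K[X]) (n : ℕ), f.degree ≤ n → (D₂ f).degree ≤ n)

include hD₁ hD₂

theorem degree_jacobian_lt {f g : K[X]} {a b : ℕ} (hf : f.degree ≤ a) (hg : g.degree ≤ b) :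
    (D₁.jacobian D₂ f g).degree < (a + b : ℕ) := by
  refine (degree_sub_le _ _).trans_lt (max_lt ?_ ?_)
  · exact degree_mul_lt_of_lt_of_le (hD₁ f a hf) (hD₂ g b hg)
  · rw [mul_comm, add_comm]
    exact degree_mul_lt_of_lt_of_le (hD₁ g b hg) (hD₂ f a hf)

theorem degree_quotJacobian_lt {p q f : K[X]} {m n a : ℕ} (hp : p.degree ≤ m)
    (hq : q.degree ≤ n) (hf : f.degree ≤ a) :
    (D₁.quotJacobian D₂ p q f).degree < (a + (m + n) : ℕ) := by
  rw [Derivation.quotJacobian_apply]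
  refine (degree_sub_le _ _).trans_lt (max_lt ?_ ?_)
  · rw [mul_comm, show a + (m + n) = (a + n) + m by ring]
    exact degree_mul_lt_of_lt_of_le (degree_jacobian_lt hD₁ hD₂ hf hq) hp
  · rw [mul_comm, show a + (m + n) = (a + m) + n by ring]
    exact degree_mul_lt_of_lt_of_le (degree_jacobian_lt hD₁ hD₂ hf hp) hq

theorem degree_quotJacobian_divByMonic_lt [Nontrivial K] {p q : K[X]} {m n : ℕ} (hp : p.Monic)
    (hpm : p.natDegree = m) (hq : q.degree ≤ n) (k : ℕ) :
    (D₁.quotJacobian D₂ p q (q ^ k /ₘ p ^ k)).degree < (m + n : ℕ) := by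
  set r := q ^ k %ₘ p ^ k
  have hp' : p.degree ≤ m := hpm ▸ degree_le_natDegree
  have hpk : (p ^ k).degree = (k * m : ℕ) := by
    rw [degree_eq_natDegree (hp.pow k).ne_zero, hp.natDegree_pow, hpm]
  have hr : r.degree ≤ (k * m : ℕ) := hpk ▸ (degree_modByMonic_lt _ (hp.pow k)).le
  have key := Derivation.map_mul_pow_of_pow_eq_mul_pow_add
    (D₁.quotJacobian_apply_denom D₂ p q) (D₁.quotJacobian_apply_num D₂ p q)
    (by rw [mul_comm, add_comm, modByMonic_add_div] : q ^ k = q ^ k /ₘ p ^ k * p ^ k + r)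
  have hrhs : (k • (D₁.jacobian D₂ p q * r) - D₁.quotJacobian D₂ p q r).degree
      < (k * m + (m + n) : ℕ) := by
    refine (degree_sub_le _ _).trans_lt (max_lt ?_ (degree_quotJacobian_lt hD₁ hD₂ hp' hq hr))
    refine (degree_smul_le _ _).trans_lt ?_
    rw [add_comm]
    exact degree_mul_lt_of_lt_of_le (degree_jacobian_lt hD₁ hD₂ hp' hq) hr
  rw [← key, (hp.pow k).degree_mul, hpk, Nat.cast_add, add_comm] at hrhs
  exact lt_of_add_lt_add_left hrhs

end Polynomial

section
variable {K : Type*} [CommRing K] {d : K → K}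
  (hd_add : ∀ a b : K, d (a + b) = d a + d b)
  (hd_mul : ∀ a b : K, d (a * b) = a * d b + d a * b)

def derivationOfLeibniz : Derivation ℤ K K :=
  Derivation.mk' (AddMonoidHom.mk' d hd_add).toIntLinearMap fun a b => by
    simp [hd_mul, mul_comm]

noncomputable def pmapDerivation : Derivation ℤ K[X] K[X] :=
  PolynomialModule.equivPolynomialSelf.toLinearMap.compDer
    (derivationOfLeibniz hd_add hd_mul).mapCoeffs

include hd_add in
theorem coeff_pmap (f : K[X]) (n : ℕ) : (pmap d f).coeff n = d (f.coeff n) := by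
  simp only [pmap, Polynomial.sum, finsetSum_coeff, coeff_C_mul_X_pow]
  rw [Finset.sum_ite_eq, ite_eq_left_iff, notMem_support_iff]
  intro h
  rw [h]
  exact (map_zero (AddMonoidHom.mk' d hd_add)).symm

include hd_add in
theorem degree_pmap_le (f : K[X]) : (pmap d f).degree ≤ f.degree := by
  refine (degree_le_iff_coeff_zero _ _).mpr fun n hn => ?_
  rw [coeff_pmap hd_add, coeff_eq_zero_of_degree_lt hn]
  exact map_zero (AddMonoidHom.mk' d hd_add)

theorem coe_pmapDerivation : ⇑(pmapDerivation hd_add hd_mul) = pmap d := by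
  funext f
  ext n
  rw [coeff_pmap hd_add]
  rfl

end

theorem t_flow_preserves_rational_reduction_general {K : Type*} [Field K]
    (d : K → K)
    (hd_add : ∀ a b : K, d (a + b) = d a + d b)
    (hd_mul : ∀ a b : K, d (a * b) = a * d b + d a * b)
    (N k : ℕ)
    (p q : Polynomial K) (hp : p.Monic) (hpd : p.natDegree = N) (hqd : q.natDegree = N + 1)
    (s : Polynomial K) (hs : s = (q ^ k) /ₘ (p ^ k))
    (H : Polynomial K) (hH : H = s - C (s.coeff 0 / 2))
    (P : Polynomial K)
    (hP : P = X * (derivative H) * (pmap d q * p - q * pmap d p)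
        - X * pmap d H * (derivative q * p - q * derivative p)) :
    P.degree ≤ (2 * N + 1 : ℕ) := by
  set W := (derivative'.restrictScalars ℤ).quotJacobian (pmapDerivation hd_add hd_mul) p q
  have hD₁ : ∀ (f : K[X]) (n : ℕ), f.degree ≤ n →
      (derivative'.restrictScalars ℤ f).degree < n :=
    fun _ _ => degree_derivative_lt_of_degree_le
  have hD₂ : ∀ (f : K[X]) (n : ℕ), f.degree ≤ n →
      (pmapDerivation hd_add hd_mul f).degree ≤ n :=
    fun f _ hf => coe_pmapDerivation hd_add hd_mul ▸ (degree_pmap_le hd_add f).trans hf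
  have hp' : p.degree ≤ N := hpd ▸ degree_le_natDegree
  have hq : q.degree ≤ (N + 1 : ℕ) := hqd ▸ degree_le_natDegree
  have hWs : (W s).degree < (N + (N + 1) : ℕ) :=
    hs ▸ degree_quotJacobian_divByMonic_lt hD₁ hD₂ hp hpd hq k
  have hWc : (W (C (s.coeff 0 / 2))).degree < (N + (N + 1) : ℕ) := by
    simpa using degree_quotJacobian_lt hD₁ hD₂ hp' hq (degree_C_le (a := s.coeff 0 / 2))
  have hWH : (W H).degree < (2 * N + 1 : ℕ) := by
    rw [hH, map_sub, show 2 * N + 1 = N + (N + 1) by ring]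
    exact (degree_sub_le _ _).trans_lt (max_lt hWs hWc)
  have hPW : P = X * W H := by
    rw [hP]
    simp only [W, Derivation.quotJacobian_apply, Derivation.jacobian, coe_pmapDerivation,
      Derivation.restrictScalars_apply, derivative'_apply]
    ring
  calc P.degree = (W H).degree + 1 := by rw [hPW, mul_comm, degree_mul_X]
    _ ≤ (2 * N + 1 : ℕ) := Nat.WithBot.add_one_le_of_lt hWH

/-- for the rational reduction `z = q/p` the bracket `{H_k, z} = P/p²`
has numerator of degree at most `2N+1`, i.e. the `t_k`-flows preserve the rational
form of `z`.  Here `s` is the quotient of the Euclidean division of `q^k` by the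
monic polynomial `p^k` and `H = s − (1/2)s₀`. -/
theorem t_flow_preserves_rational_reduction {K : Type*} [Field K] [CharZero K]
    (d : K → K)
    (hd_add : ∀ a b : K, d (a + b) = d a + d b)
    (hd_mul : ∀ a b : K, d (a * b) = a * d b + d a * b)
    (N k : ℕ) (hN : 1 ≤ N) (hk : 1 ≤ k)
    (p q : Polynomial K) (hp : p.Monic) (hpd : p.natDegree = N) (hqd : q.natDegree = N + 1)
    (s : Polynomial K) (hs : s = (q ^ k) /ₘ (p ^ k))
    (H : Polynomial K) (hH : H = s - C (s.coeff 0 / 2))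
    (P : Polynomial K)
    (hP : P = X * (derivative H) * (pmap d q * p - q * pmap d p)
        - X * pmap d H * (derivative q * p - q * derivative p)) :
    P.degree ≤ (2 * N + 1 : ℕ) :=
  t_flow_preserves_rational_reduction_general d hd_add hd_mul N k p q hp hpd hqd s hs H hH P hP
end

section
/- Let K be a field of characteristic zero with a derivation d : K → K, extended to the field K(w) of rational functions (with d(w) = 0), and let ∂_w denote the derivative with respect to w. Let p, q ∈ K[w] with p monic of degree N ≥ 1, deg q = N+1, and p(0) ≠ 0; set z := q/p. Let B, C ∈ K[w] with deg B ≤ N+1, deg C ≤ N and C(0) = 1, set r := B(0) and Z̄ := B/(w·C) ∈ K(w) (this represents z̄(1/w) for the rational reduction of z̄). Assume the string equation holds: w·(∂_w z)·(d Z̄) − w·(d z)·(∂_w Z̄) = 1 in K(w). Define H̄₁ := r·w⁻¹ + (1/2)·(B₁ − r·C₁) ∈ K(w), where B₁, C₁ are the coefficients of w¹ in B and C (so H̄₁ = (z̄)₋ + (1/2)(z̄)₀ for the Laurent expansion of Z̄ at w = 0). Then there exists Q ∈ K[w] with deg Q ≤ 2N+1 such that w·(∂_w H̄₁)·(d z)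 − w·(d H̄₁)·(∂_w z) = Q/p² in K(w); i.e., given the string equation, the first t̄-flow of the 2dToda hierarchy preserves the rational form of z. -/
/-!
Let `A`, `A_d` be the numerators of `∂_w z` and `d z` over `p²`, and `Ā`, `Ā_d` those of `∂_w Z̄`
and `d Z̄` over `(wC)²`. Since `w·∂_w H̄₁ = -r/w` and `w·d H̄₁ = d r + c w` for a constant `c`,
`{H̄₁, z} = (-(r A_d)/w - (c w + d r) A) / p²`, and `A` is a Wronskian of degree `≤ 2N`.
The only obstruction is the pole at `w = 0`, i.e. `r A_d(0)`. Clearing denominators, the string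
equation reads `w (A·Ā_d - A_d·Ā) = p² w² C²`, where `Ā_d` vanishes at `0` and `Ā(0) = -B(0)C(0) = -r`;
its coefficient of `w` gives `r A_d(0) = 0`.
-/

open Polynomial

section CommRing

variable {R : Type*} [CommRing R]

theorem natDegree_pmap_le (d : R → R) (f : R[X]) : (pmap d f).natDegree ≤ f.natDegree := by
  unfold pmap
  refine (natDegree_sum_le_of_forall_le _ _ fun n hn => ?_)
  exact (natDegree_C_mul_X_pow_le _ _).trans (le_natDegree_of_ne_zero (mem_support_iff.mp hn))

theorem natDegree_pmap_mul_sub_mul_pmap_le (d : R → R) (f g : R[X]) :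
    (pmap d f * g - f * pmap d g).natDegree ≤ f.natDegree + g.natDegree := by
  refine (natDegree_sub_le _ _).trans (max_le ?_ ?_) <;> refine natDegree_mul_le.trans ?_
  · exact Nat.add_le_add_right (natDegree_pmap_le d f) _
  · exact Nat.add_le_add_left (natDegree_pmap_le d g) _

theorem natDegree_derivative_mul_sub_mul_derivative_le (f g : R[X]) :
    (derivative f * g - f * derivative g).natDegree ≤ f.natDegree + g.natDegree - 1 := by
  have hw : derivative f * g - f * derivative g = wronskian g f := by
    unfold wronskian; ring
  rw [hw]
  rcases eq_or_ne (wronskian g f) 0 with h | h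
  · simp [h]
  · have := natDegree_wronskian_lt_add h
    omega

theorem natDegree_neg_sub_linear_mul_le {n : ℕ} {S A : R[X]} (b c : R)
    (hS : S.natDegree ≤ n + 1) (hA : A.natDegree ≤ n) :
    (-S - (C c * X + C b) * A).natDegree ≤ n + 1 := by
  refine (natDegree_sub_le _ _).trans (max_le (by rwa [natDegree_neg]) ?_)
  have := natDegree_linear_le (a := c) (b := b)
  exact natDegree_mul_le.trans (by omega)

theorem coeff_zero_derivative_mul_X_mul_sub (b c : R[X]) :
    (derivative b * (X * c) - b * derivative (X * c)).coeff 0 = -(b.coeff 0 * c.coeff 0) := by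
  simp [mul_coeff_zero, coeff_derivative]

theorem coeff_zero_mul_coeff_zero_eq_zero_of_X_mul_sub_X_mul_eq {a b c e p u : R[X]}
    (h : X * (a * b) - X * (c * e) = p ^ 2 * (X * u) ^ 2) (hb : b.coeff 0 = 0) :
    c.coeff 0 * e.coeff 0 = 0 := by
  have h1 := congrArg (coeff · 1) h
  have hrhs : p ^ 2 * (X * u) ^ 2 = X * (X * (p ^ 2 * u ^ 2)) := by ring
  rw [hrhs, show (1 : ℕ) = 0 + 1 from rfl] at h1
  simp only [coeff_sub, coeff_X_mul, mul_coeff_zero, coeff_X_zero, hb] at h1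
  linear_combination -h1

end CommRing

section Field

variable {K : Type*} [Field K]

local notation "ι" => algebraMap K[X] (RatFunc K)

/-- The Lax–Poisson bracket `w·(∂_w f)·(d g) − w·(d f)·(∂_w g)`, in terms of the derivatives
`fw = ∂_w f`, `fd = d f`, `gw = ∂_w g`, `gd = d g`. -/
noncomputable def laxBracket (fw fd gw gd : RatFunc K) : RatFunc K :=
  RatFunc.X * fw * gd - RatFunc.X * fd * gw

theorem numerator_eq_of_laxBracket_eq_one {a b c e p u : K[X]} (hp : p ≠ 0) (hu : u ≠ 0)
    (h : laxBracket (ι a / ι (p ^ 2)) (ι c / ι (p ^ 2)) (ι e / ι (u ^ 2)) (ι b / ι (u ^ 2)) = 1) :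
    X * (a * b) - X * (c * e) = p ^ 2 * u ^ 2 := by
  apply RatFunc.algebraMap_injective K
  have hp' : ι p ≠ 0 := RatFunc.algebraMap_ne_zero hp
  have hu' : ι u ≠ 0 := RatFunc.algebraMap_ne_zero hu
  unfold laxBracket at h
  rw [← RatFunc.algebraMap_X] at h
  simp only [map_sub, map_mul, map_pow] at h ⊢
  field_simp at h
  linear_combination h

theorem laxBracket_eq_of_X_mul_eq (a b c : K) {A Ad S p : K[X]} (hS : X * S = C a * Ad) :
    laxBracket (-ι (C a) / RatFunc.X ^ 2) (ι (C b) / RatFunc.X + ι (C c))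
        (ι A / ι (p ^ 2)) (ι Ad / ι (p ^ 2))
      = ι (-S - (C c * X + C b) * A) / ι (p ^ 2) := by
  have hS' : ι (C a) * ι Ad = ι X * ι S := by rw [← map_mul, ← map_mul, hS]
  have hX : ι X ≠ 0 := RatFunc.algebraMap_ne_zero X_ne_zero
  unfold laxBracket
  rw [← RatFunc.algebraMap_X]
  simp only [map_sub, map_add, map_mul, map_neg, map_pow]
  field_simp
  linear_combination -(ι p)⁻¹ ^ 2 * hS'

end Field

theorem tbar_flow_preserves_rational_reduction_general {K : Type*} [Field K]
    (d : K → K)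
    (N : ℕ)
    (p q B Cp : Polynomial K)
    (hp : p.Monic) (hpd : p.natDegree = N) (hqd : q.natDegree = N + 1)
    (hC0 : Cp.coeff 0 = 1)
    (r : K) (hr : r = B.coeff 0)
    -- the `w`- and `x`-derivatives of `z = q/p` and of `Z̄ = B/(w·C)` in `K(w)`:
    (Zw Zd Zbw Zbd : RatFunc K)
    (hZw : Zw = algebraMap (Polynomial K) (RatFunc K) (derivative q * p - q * derivative p)
        / algebraMap (Polynomial K) (RatFunc K) (p ^ 2))
    (hZd : Zd = algebraMap (Polynomial K) (RatFunc K) (pmap d q * p - q * pmap d p)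
        / algebraMap (Polynomial K) (RatFunc K) (p ^ 2))
    (hZbw : Zbw = algebraMap (Polynomial K) (RatFunc K)
          (derivative B * (X * Cp) - B * derivative (X * Cp))
        / algebraMap (Polynomial K) (RatFunc K) ((X * Cp) ^ 2))
    (hZbd : Zbd = algebraMap (Polynomial K) (RatFunc K)
          (pmap d B * (X * Cp) - B * (X * pmap d Cp))
        / algebraMap (Polynomial K) (RatFunc K) ((X * Cp) ^ 2))
    -- the string equation `w·(∂_w z)·(d Z̄) − w·(d z)·(∂_w Z̄) = 1`:
    (hstring : RatFunc.X * Zw * Zbd - RatFunc.X * Zd * Zbw = 1)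
    -- the `w`- and `x`-derivatives of `H̄₁ = r·w⁻¹ + (1/2)(B₁ − r·C₁)`:
    (Hbw Hbd : RatFunc K)
    (hHbw : Hbw = - algebraMap (Polynomial K) (RatFunc K) (C r) / RatFunc.X ^ 2)
    (hHbd : Hbd = algebraMap (Polynomial K) (RatFunc K) (C (d r)) / RatFunc.X
        + algebraMap (Polynomial K) (RatFunc K)
            (C ((d (B.coeff 1) - (d r * Cp.coeff 1 + r * d (Cp.coeff 1))) / 2))) :
    ∃ Q : Polynomial K, Q.degree ≤ (2 * N + 1 : ℕ) ∧
      RatFunc.X * Hbw * Zd - RatFunc.X * Hbd * Zw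
        = algebraMap (Polynomial K) (RatFunc K) Q
          / algebraMap (Polynomial K) (RatFunc K) (p ^ 2) := by
  have hCp : Cp ≠ 0 := by rintro rfl; simp at hC0
  have hnum := numerator_eq_of_laxBracket_eq_one hp.ne_zero (mul_ne_zero X_ne_zero hCp)
    (by subst hZw hZd hZbw hZbd; exact hstring)
  -- the coefficient of `w` in the string equation kills the `w⁻¹` term of `{H̄₁, z}`
  have hres : (C r * (pmap d q * p - q * pmap d p)).coeff 0 = 0 := by
    have h :=
      coeff_zero_mul_coeff_zero_eq_zero_of_X_mul_sub_X_mul_eq hnum (by simp [mul_coeff_zero])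
    rw [coeff_zero_derivative_mul_X_mul_sub, hC0, ← hr] at h
    rw [mul_coeff_zero, coeff_C_zero]
    linear_combination -h
  have hS := X_mul_divX_add (C r * (pmap d q * p - q * pmap d p))
  rw [hres, map_zero, add_zero] at hS
  subst hHbw hHbd hZw hZd
  refine ⟨_, degree_le_of_natDegree_le (natDegree_neg_sub_linear_mul_le _ _ ?_ ?_),
    laxBracket_eq_of_X_mul_eq r (d r) _ hS⟩
  · have := (natDegree_C_mul_le r _).trans (natDegree_pmap_mul_sub_mul_pmap_le d q p)
    rw [natDegree_divX_eq_natDegree_tsub_one]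
    omega
  · have := natDegree_derivative_mul_sub_mul_derivative_le q p
    omega

/-- given the string equation, the first `t̄`-flow of the 2dToda
hierarchy preserves the rational form of `z = q/p`.  Here `Z̄ = B/(w·C)` represents
`z̄(1/w)`, the derivatives `∂_w` and `d` of `z` and `Z̄` are given by the quotient
rule, `H̄₁ = r·w⁻¹ + (1/2)(B₁ − r·C₁)` with `r = B(0)`, and the conclusion exhibits
`{H̄₁, z} = Q/p²` with `deg Q ≤ 2N+1`. -/
theorem tbar_flow_preserves_rational_reduction {K : Type*} [Field K] [CharZero K]
    (d : K → K)
    (hd_add : ∀ a b : K, d (a + b) = d a + d b)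
    (hd_mul : ∀ a b : K, d (a * b) = a * d b + d a * b)
    (N : ℕ) (hN : 1 ≤ N)
    (p q B Cp : Polynomial K)
    (hp : p.Monic) (hpd : p.natDegree = N) (hqd : q.natDegree = N + 1)
    (hp0 : p.eval 0 ≠ 0)
    (hB : B.degree ≤ (N + 1 : ℕ)) (hCdeg : Cp.degree ≤ (N : ℕ)) (hC0 : Cp.coeff 0 = 1)
    (r : K) (hr : r = B.coeff 0)
    -- the `w`- and `x`-derivatives of `z = q/p` and of `Z̄ = B/(w·C)` in `K(w)`:
    (Zw Zd Zbw Zbd : RatFunc K)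
    (hZw : Zw = algebraMap (Polynomial K) (RatFunc K) (derivative q * p - q * derivative p)
        / algebraMap (Polynomial K) (RatFunc K) (p ^ 2))
    (hZd : Zd = algebraMap (Polynomial K) (RatFunc K) (pmap d q * p - q * pmap d p)
        / algebraMap (Polynomial K) (RatFunc K) (p ^ 2))
    (hZbw : Zbw = algebraMap (Polynomial K) (RatFunc K)
          (derivative B * (X * Cp) - B * derivative (X * Cp))
        / algebraMap (Polynomial K) (RatFunc K) ((X * Cp) ^ 2))
    (hZbd : Zbd = algebraMap (Polynomial K) (RatFunc K)
          (pmap d B * (X * Cp) - B * (X * pmap d Cp))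
        / algebraMap (Polynomial K) (RatFunc K) ((X * Cp) ^ 2))
    -- the string equation `w·(∂_w z)·(d Z̄) − w·(d z)·(∂_w Z̄) = 1`:
    (hstring : RatFunc.X * Zw * Zbd - RatFunc.X * Zd * Zbw = 1)
    -- the `w`- and `x`-derivatives of `H̄₁ = r·w⁻¹ + (1/2)(B₁ − r·C₁)`:
    (Hbw Hbd : RatFunc K)
    (hHbw : Hbw = - algebraMap (Polynomial K) (RatFunc K) (C r) / RatFunc.X ^ 2)
    (hHbd : Hbd = algebraMap (Polynomial K) (RatFunc K) (C (d r)) / RatFunc.X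
        + algebraMap (Polynomial K) (RatFunc K)
            (C ((d (B.coeff 1) - (d r * Cp.coeff 1 + r * d (Cp.coeff 1))) / 2))) :
    ∃ Q : Polynomial K, Q.degree ≤ (2 * N + 1 : ℕ) ∧
      RatFunc.X * Hbw * Zd - RatFunc.X * Hbd * Zw
        = algebraMap (Polynomial K) (RatFunc K) Q
          / algebraMap (Polynomial K) (RatFunc K) (p ^ 2) :=
  tbar_flow_preserves_rational_reduction_general d N p q B Cp hp hpd hqd hC0 r hr Zw Zd Zbw Zbd hZw
    hZd hZbw hZbd hstring Hbw Hbd hHbw hHbd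
end

section
/- Fix i ∈ {1,…,n+1} and define Ḡ^i_w(x,w) := 1/(w²·(w̄_i − 1/w)) and Ḡ^i_x(x,w) := w̄_i′/(w̄_i − 1/w) + (1/2)(r′/r − w̄_i′/w̄_i) (the w- and x-derivatives of the evolution function 𝓗̄_i = log(w̄_i − 1/w) + (1/2)log(r/w̄_i)). If the string equation holds, then there exist functions α, β, γ₁,…,γ_{n+1} : ℝ → ℂ such that for every x and every w ∈ ℂ outside {0} ∪ {w_j(x)} ∪ {1/w̄_j(x)}: w·Ḡ^i_w·Z_x − w·Ḡ^i_x·Z_w = α(x)·w + β(x) + Σ_{j=1}^{n+1} γ_j(x)/(w_j(x) − w). In particular the bracket {𝓗̄_i, z} has no pole at w = 1/w̄_i(x), so the τ̄_i-flow is tangent to the manifold of logarithmic reductions. -/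
/-!
With `b = w̄_i(x)` and `c = (r'/r - w̄_i'/w̄_i) / 2`, the bracket is `P(w) / (b w - 1) - c w Z_w`,
where `P = Z_x - w̄_i' w² Z_w`. Both `P` and `w Z_w` are polynomials plus simple poles at the `w_j`,
so only the pole at `w = 1/b` is in question. Multiplying the string equation by `b - 1/w` and
letting `w → 1/b` leaves only the residue terms of `Z̄_x` and `Z̄_w` there, which (as `ā_i ≠ 0`)
gives `P(1/b) = 0`. A polynomial of degree `≤ 2` plus simple poles, divided by `w - 1/b` at one of
its zeros, is a polynomial of degree `≤ 1` plus simple poles at the same points.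
-/

open Finset Filter Topology Polynomial

theorem ContinuousAt.eq_of_forall_notMem_countable {Y : Type*} [TopologicalSpace Y] [T2Space Y]
    {g : ℂ → Y} {S : Set ℂ} {z : ℂ} {y : Y} (hS : S.Countable) (hg : ContinuousAt g z)
    (h : ∀ w ∉ S, g w = y) : g z = y := by
  have hfreq : ∃ᶠ w in 𝓝 z, w ∈ Sᶜ :=
    mem_closure_iff_frequently.mp ((hS.dense_compl ℂ).closure_eq ▸ Set.mem_univ z)
  exact tendsto_nhds_unique_of_frequently_eq hg tendsto_const_nhds (hfreq.mono h)

theorem continuousAt_sum_div {ι : Type*} {s : Finset ι} {c : ι → ℂ} {g : ι → ℂ → ℂ} {z : ℂ}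
    (hg : ∀ j ∈ s, ContinuousAt (g j) z) (hg0 : ∀ j ∈ s, g j z ≠ 0) :
    ContinuousAt (fun w => ∑ j ∈ s, c j / g j w) z :=
  tendsto_finsetSum s fun j hj => continuousAt_const.div (hg j hj) (hg0 j hj)

theorem eq_of_string_equation_near_pole {S : Set ℂ} (hS : S.Countable) {A B φ ψ : ℂ → ℂ}
    {ab b b' : ℂ} (hb : b ≠ 0) (hab : ab ≠ 0) (hA : ContinuousAt A b⁻¹)
    (hB : ContinuousAt B b⁻¹) (hφ : ContinuousAt φ b⁻¹) (hψ : ContinuousAt ψ b⁻¹)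
    (h : ∀ w ∉ S, w * A w * (φ w + ab * b' / (b - 1 / w))
      - w * B w * (ψ w + ab / (w ^ 2 * (b - 1 / w))) = 1) :
    B b⁻¹ = b' * b⁻¹ ^ 2 * A b⁻¹ := by
  -- `g w = (b - 1 / w) * (lhs w - 1)` off `S ∪ {0, 1 / b}`, and `g` is continuous at `1 / b`
  set g : ℂ → ℂ := fun w => (b - 1 / w) * (w * A w * φ w - w * B w * ψ w - 1)
    + ab * (b' * w * A w - B w / w)
  have hb' : b⁻¹ ≠ 0 := inv_ne_zero hb
  have hg : ContinuousAt g b⁻¹ := by fun_prop (disch := exact hb')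
  have hg0 : ∀ w ∉ S ∪ {0, b⁻¹}, g w = 0 := by
    intro w hw
    simp only [Set.mem_union, Set.mem_insert_iff, Set.mem_singleton_iff, not_or] at hw
    obtain ⟨hwS, hw0, hwb⟩ := hw
    have hbw : b - 1 / w ≠ 0 := fun h => hwb (by rw [sub_eq_zero] at h; rw [h, one_div, inv_inv])
    have e1 : (b - 1 / w) * (ab * b' / (b - 1 / w)) = ab * b' := mul_div_cancel₀ _ hbw
    have e2 : w * (b - 1 / w) * (ab / (w ^ 2 * (b - 1 / w))) = ab / w := by
      rw [mul_div_assoc', div_eq_div_iff (mul_ne_zero (pow_ne_zero 2 hw0) hbw) hw0]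
      ring
    linear_combination (b - 1 / w) * h w hwS - w * A w * e1 + B w * e2
  have := hg.eq_of_forall_notMem_countable (hS.union (Set.toFinite _).countable) hg0
  simp only [g, one_div, inv_inv, sub_self, zero_mul, zero_add] at this
  have hres := sub_eq_zero.mp ((mul_eq_zero.mp this).resolve_left hab)
  rw [eq_div_iff hb'] at hres
  linear_combination -hres

section PartialFractions

variable {ι : Type*} (s : Finset ι) (W : ι → ℂ)

def HasPartialFractionOn (d : ℕ) (U : Set ℂ) (f : ℂ → ℂ) : Prop :=
  ∃ p : ℂ[X], p.natDegree ≤ d ∧ ∃ γ : ι → ℂ, ∀ w ∈ U, f w = p.eval w + ∑ j ∈ s, γ j / (W j - w)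

namespace HasPartialFractionOn

variable {s W} {d : ℕ} {U : Set ℂ} {f g : ℂ → ℂ}

theorem mono {d' : ℕ} {U' : Set ℂ} (h : HasPartialFractionOn s W d U f) (hd : d ≤ d')
    (hU : U' ⊆ U) : HasPartialFractionOn s W d' U' f := by
  obtain ⟨p, hp, γ, hf⟩ := h
  exact ⟨p, hp.trans hd, γ, fun w hw => hf w (hU hw)⟩

theorem congr (h : HasPartialFractionOn s W d U f) (hfg : Set.EqOn f g U) :
    HasPartialFractionOn s W d U g := by
  obtain ⟨p, hp, γ, hf⟩ := h
  exact ⟨p, hp, γ, fun w hw => hfg hw ▸ hf w hw⟩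

theorem add (hf : HasPartialFractionOn s W d U f) (hg : HasPartialFractionOn s W d U g) :
    HasPartialFractionOn s W d U (fun w => f w + g w) := by
  obtain ⟨p, hp, γ, hf⟩ := hf
  obtain ⟨q, hq, δ, hg⟩ := hg
  refine ⟨p + q, natDegree_add_le_of_degree_le hp hq, γ + δ, fun w hw => ?_⟩
  simp only [hf w hw, hg w hw, eval_add, Pi.add_apply, add_div, sum_add_distrib]
  ring

theorem const_mul (k : ℂ) (h : HasPartialFractionOn s W d U f) :
    HasPartialFractionOn s W d U (fun w => k * f w) := by
  obtain ⟨p, hp, γ, hf⟩ := h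
  refine ⟨C k * p, (natDegree_C_mul_le k p).trans hp, k • γ, fun w hw => ?_⟩
  simp only [hf w hw, eval_mul, eval_C, Pi.smul_apply, smul_eq_mul, mul_add, mul_sum, mul_div_assoc]

theorem id_mul (hU : ∀ w ∈ U, ∀ j ∈ s, w ≠ W j) (h : HasPartialFractionOn s W d U f) :
    HasPartialFractionOn s W (d + 1) U (fun w => w * f w) := by
  obtain ⟨p, hp, γ, hf⟩ := h
  refine ⟨X * p - C (∑ j ∈ s, γ j), ?_, fun j => W j * γ j, fun w hw => ?_⟩
  · refine (natDegree_sub_le _ _).trans (max_le ?_ (by rw [natDegree_C]; omega))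
    exact natDegree_mul_le.trans (by rw [natDegree_X]; omega)
  · have hpole : ∀ j ∈ s, w * (γ j / (W j - w)) = W j * γ j / (W j - w) - γ j := fun j hj => by
      have : W j - w ≠ 0 := sub_ne_zero.mpr (hU w hw j hj).symm
      field_simp
      ring
    simp only [hf w hw, eval_sub, eval_mul, eval_X, eval_C, mul_add, mul_sum,
      sum_congr rfl hpole, sum_sub_distrib]
    ring

theorem div_sub {w₀ : ℂ} (hU : ∀ w ∈ U, ∀ j ∈ s, w ≠ W j)
    (h : HasPartialFractionOn s W (d + 1) U f) (hw₀ : w₀ ∈ U) (hf₀ : f w₀ = 0) :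
    HasPartialFractionOn s W d (U \ {w₀}) (fun w => f w / (w - w₀)) := by
  obtain ⟨p, hp, γ, hf⟩ := h
  have hmonic := monic_X_sub_C w₀
  refine ⟨p /ₘ (X - C w₀), ?_, fun j => γ j / (W j - w₀), fun w hw => ?_⟩
  · rw [natDegree_divByMonic _ hmonic, natDegree_X_sub_C]; omega
  obtain ⟨hwU, hww₀⟩ := hw
  have hsub : w - w₀ ≠ 0 := sub_ne_zero.mpr hww₀
  have heval : p.eval w - p.eval w₀ = (w - w₀) * (p /ₘ (X - C w₀)).eval w := by
    conv_lhs => rw [← modByMonic_add_div p (X - C w₀), modByMonic_X_sub_C_eq_C_eval]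
    simp
  have hpole : ∀ j ∈ s, γ j / (W j - w) - γ j / (W j - w₀)
      = (w - w₀) * (γ j / (W j - w₀) / (W j - w)) := fun j hj => by
    have h1 : W j - w ≠ 0 := sub_ne_zero.mpr (hU w hwU j hj).symm
    have h2 : W j - w₀ ≠ 0 := sub_ne_zero.mpr (hU w₀ hw₀ j hj).symm
    field_simp
    ring
  rw [div_eq_iff hsub, hf w hwU, ← sub_zero (_ + _), ← hf₀, hf w₀ hw₀, mul_comm,
    add_sub_add_comm, heval, ← sum_sub_distrib, sum_congr rfl hpole, ← mul_sum, mul_add]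

theorem exists_affine (h : HasPartialFractionOn s W 1 U f) :
    ∃ α β : ℂ, ∃ γ : ι → ℂ, ∀ w ∈ U, f w = α * w + β + ∑ j ∈ s, γ j / (W j - w) := by
  obtain ⟨p, hp, γ, hf⟩ := h
  refine ⟨p.coeff 1, p.coeff 0, γ, fun w hw => ?_⟩
  rw [hf w hw, eq_X_add_C_of_natDegree_le_one hp]
  simp

end HasPartialFractionOn

end PartialFractions

section LogarithmicReduction

variable {ι : Type*} {s : Finset ι} {a W W' : ι → ℂ} {r r' u' : ℂ} {Zw Zx : ℂ → ℂ}

theorem hasPartialFractionOn_Zw (hZw : ∀ w, Zw w = r + ∑ j ∈ s, a j / (w - W j)) :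
    HasPartialFractionOn s W 0 Set.univ Zw :=
  ⟨C r, (natDegree_C r).le, fun j => -a j, fun w _ => by
    simp only [hZw, eval_C, neg_div, ← div_neg, neg_sub]⟩

theorem hasPartialFractionOn_Zx (hZx : ∀ w, Zx w = r' * w + u' + ∑ j ∈ s, a j * W' j / (W j - w)) :
    HasPartialFractionOn s W 1 Set.univ Zx :=
  ⟨C r' * X + C u', by compute_degree, fun j => a j * W' j, fun w _ => by simp [hZx]⟩

theorem hasPartialFractionOn_bracket (hZw : ∀ w, Zw w = r + ∑ j ∈ s, a j / (w - W j))
    (hZx : ∀ w, Zx w = r' * w + u' + ∑ j ∈ s, a j * W' j / (W j - w)) {b b' c : ℂ}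
    (hb : b ≠ 0) (hWb : ∀ j ∈ s, W j * b ≠ 1) (hres : Zx b⁻¹ = b' * b⁻¹ ^ 2 * Zw b⁻¹) :
    HasPartialFractionOn s W 1 {w | w ≠ 0 ∧ b * w ≠ 1 ∧ ∀ j ∈ s, w ≠ W j}
      (fun w => w * (1 / (w ^ 2 * (b - 1 / w))) * Zx w - w * (b' / (b - 1 / w) + c) * Zw w) := by
  set V : Set ℂ := {w | ∀ j ∈ s, w ≠ W j}
  have hV : ∀ w ∈ V, ∀ j ∈ s, w ≠ W j := fun w hw => hw
  have hb₀V : b⁻¹ ∈ V := fun j hj h => hWb j hj (by rw [← h, inv_mul_cancel₀ hb])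
  have hwZw : HasPartialFractionOn s W 1 V (fun w => w * Zw w) :=
    ((hasPartialFractionOn_Zw hZw).mono le_rfl (Set.subset_univ V)).id_mul hV
  have hP : HasPartialFractionOn s W 2 V (fun w => Zx w + -b' * (w * (w * Zw w))) :=
    ((hasPartialFractionOn_Zx hZx).mono one_le_two (Set.subset_univ V)).add
      ((hwZw.id_mul hV).const_mul (-b'))
  have hPdiv := hP.div_sub hV hb₀V (by rw [hres]; ring)
  refine ((hPdiv.const_mul b⁻¹).add ((hwZw.mono le_rfl Set.sdiff_subset).const_mul (-c))).mono
    le_rfl ?_ |>.congr ?_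
  · rintro w ⟨-, hbw, hwW⟩
    exact ⟨hwW, fun h => hbw (by rw [Set.mem_singleton_iff.mp h, mul_inv_cancel₀ hb])⟩
  · rintro w ⟨hw0, hbw, -⟩
    have h1 : w - b⁻¹ ≠ 0 := fun h => hbw (by rw [sub_eq_zero] at h; rw [h, mul_inv_cancel₀ hb])
    have h2 : b - 1 / w ≠ 0 := fun h => hbw (by rw [sub_eq_zero] at h; rw [h]; field_simp)
    field_simp
    ring

theorem residue_condition_of_string_equation {i : ι} (hi : i ∈ s) {abar Wb Wb' : ι → ℂ} {ubar' : ℂ}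
    {Zbw Zbx : ℂ → ℂ} (hZw : ∀ w, Zw w = r + ∑ j ∈ s, a j / (w - W j))
    (hZx : ∀ w, Zx w = r' * w + u' + ∑ j ∈ s, a j * W' j / (W j - w))
    (hZbw : ∀ w, Zbw w = -r / w ^ 2 + ∑ j ∈ s, abar j / (w ^ 2 * (Wb j - 1 / w)))
    (hZbx : ∀ w, Zbx w = r' / w + ubar' + ∑ j ∈ s, abar j * Wb' j / (Wb j - 1 / w))
    (habar : abar i ≠ 0) (hb : Wb i ≠ 0) (hWb : ∀ j ∈ s, j ≠ i → Wb j ≠ Wb i)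
    (hWWb : ∀ j ∈ s, W j * Wb i ≠ 1)
    (hstring : ∀ w, w ≠ 0 → (∀ j ∈ s, w ≠ W j) → (∀ j ∈ s, w ≠ (Wb j)⁻¹) →
      w * Zw w * Zbx w - w * Zx w * Zbw w = 1) :
    Zx (Wb i)⁻¹ = Wb' i * (Wb i)⁻¹ ^ 2 * Zw (Wb i)⁻¹ := by
  classical
  have hw₀ : (Wb i)⁻¹ ≠ 0 := inv_ne_zero hb
  have hW : ∀ j ∈ s, (Wb i)⁻¹ - W j ≠ 0 := fun j hj h =>
    hWWb j hj (by rw [← sub_eq_zero.mp h, inv_mul_cancel₀ hb])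
  have hWb' : ∀ j ∈ s.erase i, Wb j - 1 / (Wb i)⁻¹ ≠ 0 := fun j hj => by
    rw [one_div, inv_inv]
    exact sub_ne_zero.mpr (hWb j (mem_of_mem_erase hj) (ne_of_mem_erase hj))
  refine eq_of_string_equation_near_pole (S := ↑(insert 0 (s.image W ∪ s.image fun j => (Wb j)⁻¹)))
    (Finset.countable_toSet _) hb habar (φ := fun w => r' / w + ubar'
      + ∑ j ∈ s.erase i, abar j * Wb' j / (Wb j - 1 / w))
    (ψ := fun w => -r / w ^ 2 + ∑ j ∈ s.erase i, abar j / (w ^ 2 * (Wb j - 1 / w)))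
    ?_ ?_ ?_ ?_ fun w hw => ?_
  · rw [funext hZw]
    exact continuousAt_const.add (continuousAt_sum_div (fun j _ => by fun_prop) hW)
  · rw [funext hZx]
    refine (continuousAt_const.mul continuousAt_id).add continuousAt_const |>.add
      (continuousAt_sum_div (fun j _ => by fun_prop) fun j hj h => hW j hj ?_)
    linear_combination -h
  · refine (continuousAt_const.div continuousAt_id hw₀).add continuousAt_const |>.add
      (continuousAt_sum_div (fun j _ => by fun_prop (disch := exact hw₀)) hWb')
  · refine (continuousAt_const.div (continuousAt_id.pow 2) (pow_ne_zero 2 hw₀)).add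
      (continuousAt_sum_div (fun j _ => by fun_prop (disch := exact hw₀))
        fun j hj => mul_ne_zero (pow_ne_zero 2 hw₀) (hWb' j hj))
  simp only [coe_insert, coe_union, coe_image, Set.mem_insert_iff, Set.mem_union,
    Set.mem_image, mem_coe, not_or, not_exists, not_and] at hw
  obtain ⟨hw0, hwW, hwWb⟩ := hw
  have hs := hstring w hw0 (fun j hj h => hwW j hj h.symm) (fun j hj h => hwWb j hj h.symm)
  rw [hZbx, hZbw, ← add_sum_erase _ _ hi, ← add_sum_erase _ _ hi] at hs
  linear_combination hs

end LogarithmicReduction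

theorem taubar_flow_tangent_to_log_reduction_general
    (n : ℕ) (a abar : ℕ → ℂ)
    (r : ℝ → ℂ) (W Wb : ℕ → ℝ → ℂ)
    (r' u' ubar' : ℝ → ℂ) (W' Wb' : ℕ → ℝ → ℂ)
    (habar : ∀ i ∈ Finset.Icc 1 (n + 1), abar i ≠ 0)
    (hWb0 : ∀ i ∈ Finset.Icc 1 (n + 1), ∀ x : ℝ, Wb i x ≠ 0)
    (hWbdist : ∀ i ∈ Finset.Icc 1 (n + 1), ∀ j ∈ Finset.Icc 1 (n + 1), i ≠ j →
      ∀ x : ℝ, Wb i x ≠ Wb j x)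
    (hWWb : ∀ i ∈ Finset.Icc 1 (n + 1), ∀ j ∈ Finset.Icc 1 (n + 1),
      ∀ x : ℝ, W i x * Wb j x ≠ 1)
    -- the rational (in w) partial derivatives of z and z̄
    (Zw Zx Zbw Zbx : ℝ → ℂ → ℂ)
    (hZw : ∀ x w, Zw x w = r x + ∑ i ∈ Finset.Icc 1 (n + 1), a i / (w - W i x))
    (hZx : ∀ x w, Zx x w =
      r' x * w + u' x + ∑ i ∈ Finset.Icc 1 (n + 1), a i * W' i x / (W i x - w))
    (hZbw : ∀ x w, Zbw x w =
      - r x / w ^ 2 + ∑ i ∈ Finset.Icc 1 (n + 1), abar i / (w ^ 2 * (Wb i x - 1 / w)))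
    (hZbx : ∀ x w, Zbx x w =
      r' x / w + ubar' x + ∑ i ∈ Finset.Icc 1 (n + 1), abar i * Wb' i x / (Wb i x - 1 / w))
    -- the string equation
    (hstring : ∀ (x : ℝ) (w : ℂ), w ≠ 0 → (∀ j ∈ Finset.Icc 1 (n + 1), w ≠ W j x) →
      (∀ j ∈ Finset.Icc 1 (n + 1), w ≠ (Wb j x)⁻¹) →
      w * Zw x w * Zbx x w - w * Zx x w * Zbw x w = 1)
    -- the fixed index i and the derivatives Ḡ^i of the evolution function 𝓗̄_i
    (i : ℕ) (hi : i ∈ Finset.Icc 1 (n + 1))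
    (Gbw Gbx : ℝ → ℂ → ℂ)
    (hGbw : ∀ x w, Gbw x w = 1 / (w ^ 2 * (Wb i x - 1 / w)))
    (hGbx : ∀ x w, Gbx x w =
      Wb' i x / (Wb i x - 1 / w) + (1 / 2) * (r' x / r x - Wb' i x / Wb i x)) :
    ∃ α β : ℝ → ℂ, ∃ γ : ℕ → ℝ → ℂ, ∀ (x : ℝ) (w : ℂ), w ≠ 0 →
      (∀ j ∈ Finset.Icc 1 (n + 1), w ≠ W j x) →
      (∀ j ∈ Finset.Icc 1 (n + 1), w ≠ (Wb j x)⁻¹) →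
      w * Gbw x w * Zx x w - w * Gbx x w * Zw x w
        = α x * w + β x + ∑ j ∈ Finset.Icc 1 (n + 1), γ j x / (W j x - w) := by
  have hbracket (x : ℝ) := hasPartialFractionOn_bracket (hZw x) (hZx x) (hWb0 i hi x)
    (fun j hj => hWWb j hj i hi x) (c := (1 / 2) * (r' x / r x - Wb' i x / Wb i x))
    (residue_condition_of_string_equation hi (hZw x) (hZx x) (hZbw x) (hZbx x) (habar i hi)
      (hWb0 i hi x) (fun j hj hji => hWbdist j hj i hi hji x) (fun j hj => hWWb j hj i hi x)
      (hstring x))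
  choose α β γ hαβγ using fun x => (hbracket x).exists_affine
  refine ⟨α, β, fun j x => γ x j, fun x w hw hwW hwWb => ?_⟩
  have hbw : Wb i x * w ≠ 1 := fun h => hwWb i hi (eq_inv_of_mul_eq_one_right h)
  rw [hGbw, hGbx]
  exact hαβγ x w ⟨hw, hbw, hwW⟩

/-- for the logarithmic reduction of the 2dToda hierarchy, if the string
equation holds then the bracket `{𝓗̄_i, z} = w·Ḡ^i_w·Z_x − w·Ḡ^i_x·Z_w` has the
partial-fraction form `α(x)·w + β(x) + Σ_j γ_j(x)/(w_j(x) − w)`; in particular it has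
no pole at `w = 1/w̄_i(x)`, so the `τ̄_i`-flow is tangent to the manifold of
logarithmic reductions. -/
theorem taubar_flow_tangent_to_log_reduction
    (n : ℕ) (a abar : ℕ → ℂ)
    (r u ubar : ℝ → ℂ) (W Wb : ℕ → ℝ → ℂ)
    (r' u' ubar' : ℝ → ℂ) (W' Wb' : ℕ → ℝ → ℂ)
    (ha : ∀ i ∈ Finset.Icc 1 (n + 1), a i ≠ 0)
    (habar : ∀ i ∈ Finset.Icc 1 (n + 1), abar i ≠ 0)
    (hasum : ∑ i ∈ Finset.Icc 1 (n + 1), a i = 0)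
    (habarsum : ∑ i ∈ Finset.Icc 1 (n + 1), abar i = 0)
    (hr0 : ∀ x, r x ≠ 0)
    (hW0 : ∀ i ∈ Finset.Icc 1 (n + 1), ∀ x : ℝ, W i x ≠ 0)
    (hWb0 : ∀ i ∈ Finset.Icc 1 (n + 1), ∀ x : ℝ, Wb i x ≠ 0)
    (hWdist : ∀ i ∈ Finset.Icc 1 (n + 1), ∀ j ∈ Finset.Icc 1 (n + 1), i ≠ j →
      ∀ x : ℝ, W i x ≠ W j x)
    (hWbdist : ∀ i ∈ Finset.Icc 1 (n + 1), ∀ j ∈ Finset.Icc 1 (n + 1), i ≠ j →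
      ∀ x : ℝ, Wb i x ≠ Wb j x)
    (hWWb : ∀ i ∈ Finset.Icc 1 (n + 1), ∀ j ∈ Finset.Icc 1 (n + 1),
      ∀ x : ℝ, W i x * Wb j x ≠ 1)
    (hdr : ∀ x, HasDerivAt r (r' x) x)
    (hdu : ∀ x, HasDerivAt u (u' x) x)
    (hdubar : ∀ x, HasDerivAt ubar (ubar' x) x)
    (hdW : ∀ i ∈ Finset.Icc 1 (n + 1), ∀ x, HasDerivAt (W i) (W' i x) x)
    (hdWb : ∀ i ∈ Finset.Icc 1 (n + 1), ∀ x, HasDerivAt (Wb i) (Wb' i x) x)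
    -- the rational (in w) partial derivatives of z and z̄
    (Zw Zx Zbw Zbx : ℝ → ℂ → ℂ)
    (hZw : ∀ x w, Zw x w = r x + ∑ i ∈ Finset.Icc 1 (n + 1), a i / (w - W i x))
    (hZx : ∀ x w, Zx x w =
      r' x * w + u' x + ∑ i ∈ Finset.Icc 1 (n + 1), a i * W' i x / (W i x - w))
    (hZbw : ∀ x w, Zbw x w =
      - r x / w ^ 2 + ∑ i ∈ Finset.Icc 1 (n + 1), abar i / (w ^ 2 * (Wb i x - 1 / w)))
    (hZbx : ∀ x w, Zbx x w =
      r' x / w + ubar' x + ∑ i ∈ Finset.Icc 1 (n + 1), abar i * Wb' i x / (Wb i x - 1 / w))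
    -- the string equation
    (hstring : ∀ (x : ℝ) (w : ℂ), w ≠ 0 → (∀ j ∈ Finset.Icc 1 (n + 1), w ≠ W j x) →
      (∀ j ∈ Finset.Icc 1 (n + 1), w ≠ (Wb j x)⁻¹) →
      w * Zw x w * Zbx x w - w * Zx x w * Zbw x w = 1)
    -- the fixed index i and the derivatives Ḡ^i of the evolution function 𝓗̄_i
    (i : ℕ) (hi : i ∈ Finset.Icc 1 (n + 1))
    (Gbw Gbx : ℝ → ℂ → ℂ)
    (hGbw : ∀ x w, Gbw x w = 1 / (w ^ 2 * (Wb i x - 1 / w)))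
    (hGbx : ∀ x w, Gbx x w =
      Wb' i x / (Wb i x - 1 / w) + (1 / 2) * (r' x / r x - Wb' i x / Wb i x)) :
    ∃ α β : ℝ → ℂ, ∃ γ : ℕ → ℝ → ℂ, ∀ (x : ℝ) (w : ℂ), w ≠ 0 →
      (∀ j ∈ Finset.Icc 1 (n + 1), w ≠ W j x) →
      (∀ j ∈ Finset.Icc 1 (n + 1), w ≠ (Wb j x)⁻¹) →
      w * Gbw x w * Zx x w - w * Gbx x w * Zw x w
        = α x * w + β x + ∑ j ∈ Finset.Icc 1 (n + 1), γ j x / (W j x - w) :=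
  taubar_flow_tangent_to_log_reduction_general n a abar r W Wb r' u' ubar' W' Wb' habar hWb0 hWbdist
    hWWb Zw Zx Zbw Zbx hZw hZx hZbw hZbx hstring i hi Gbw Gbx hGbw hGbx
end

section
/- For i ∈ {0,1,…,n+1} define F⁰_w := r, F⁰_x := r′w + u′/2, and for i ≥ 1, F^i_w := 1/(w − w_i), F^i_x := w_i′/(w_i − w) + (1/2)(r′/r − w_i′/w_i); similarly Ḡ⁰_w := −r/w², Ḡ⁰_x := r′/w + ū′/2, and for i ≥ 1, Ḡ^i_w := 1/(w²(w̄_i − 1/w)), Ḡ^i_x := w̄_i′/(w̄_i − 1/w) + (1/2)(r′/r − w̄_i′/w̄_i). Suppose that for every i ∈ {0,…,n+1} there exist functions α_i, β_i, γ_{i,1},…,γ_{i,n+1} and ᾱ_i, β̄_i, γ̄_{i,1},…,γ̄_{i,n+1} of x such that for all x and all admissible w: w·Ḡ^i_w·Z_x − w·Ḡ^i_x·Z_w = α_i w + β_i + Σ_j γ_{i,j}/(w_j − w) and w·F^i_w·Z̄_x − w·F^i_x·Z̄_w = ᾱ_i/w + β̄_i + Σ_j γ̄_{i,j}/(w̄_j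 − 1/w). Then for every x there is a constant c(x) ∈ ℂ such that w·Z_w·Z̄_x − w·Z_x·Z̄_w = c(x) for all admissible w; i.e., if all the logarithmic flows are tangent to the manifold of logarithmic reductions, the string bracket {z, z̄} is necessarily independent of w. -/
/-!
The string bracket `{z, z̄} = w Z_w Z̄_x - w Z_x Z̄_w` is linear in `z̄`. Since `Σ āᵢ = 0`, the pair
`(Z̄_w, Z̄_x)` is the combination `Ḡ⁰ + Σ āᵢ Ḡⁱ` up to a `w`-independent shift of `Z̄_x`, so
`{z, z̄}` is a combination of the brackets `{𝓗̄ᵢ, z}` and of `w Z_w`: it has the shape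
`α w + β + Σ γⱼ / (wⱼ - w)`. Symmetrically, through the `𝓗ᵢ`, it has the shape
`ᾱ / w + β̄ + Σ γ̄ⱼ / (w̄ⱼ - 1 / w)`. The first shape is continuous at `0` and at every `1 / w̄ⱼ`,
so the poles of the second one there have zero residue, and what is left is the constant `β̄`.
-/

open Finset Filter Topology

section PartialFractions

variable {𝕜 ι : Type*}

/-- Functions that agree on `G` with `A t + B + Σ Γⱼ / (pⱼ - t)` in the variable `t = t w`. -/
def partialFractions [Field 𝕜] (t : 𝕜 → 𝕜) (S : Finset ι) (p : ι → 𝕜) (G : Set 𝕜) :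
    Submodule 𝕜 (𝕜 → 𝕜) where
  carrier := {f | ∃ A B : 𝕜, ∃ Γ : ι → 𝕜,
    ∀ w ∈ G, f w = A * t w + B + ∑ j ∈ S, Γ j / (p j - t w)}
  add_mem' := by
    rintro f g ⟨A, B, Γ, hf⟩ ⟨A', B', Γ', hg⟩
    refine ⟨A + A', B + B', Γ + Γ', fun w hw => ?_⟩
    simp only [Pi.add_apply, hf w hw, hg w hw, add_div, sum_add_distrib]
    ring
  zero_mem' := ⟨0, 0, 0, by simp⟩
  smul_mem' := by
    rintro c f ⟨A, B, Γ, hf⟩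
    refine ⟨c * A, c * B, c • Γ, fun w hw => ?_⟩
    simp only [Pi.smul_apply, smul_eq_mul, hf w hw, mul_div_assoc, ← mul_sum]
    ring

section Field

variable [Field 𝕜] {t : 𝕜 → 𝕜} {S : Finset ι} {p : ι → 𝕜} {G : Set 𝕜} {f : 𝕜 → 𝕜}
  {A B : 𝕜} {Γ : ι → 𝕜}

theorem mem_partialFractions_of_eqOn {g : 𝕜 → 𝕜} (hfg : Set.EqOn f g G)
    (hg : g ∈ partialFractions t S p G) : f ∈ partialFractions t S p G := by
  obtain ⟨A, B, Γ, hg⟩ := hg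
  exact ⟨A, B, Γ, fun w hw => (hfg hw).trans (hg w hw)⟩

theorem mem_partialFractions_id_of_eq
    (hf : ∀ w ∈ G, f w = A * w + B + ∑ j ∈ S, Γ j / (p j - w)) :
    f ∈ partialFractions id S p G :=
  ⟨A, B, Γ, hf⟩

theorem mem_partialFractions_inv_of_eq
    (hf : ∀ w ∈ G, f w = A / w + B + ∑ j ∈ S, Γ j / (p j - 1 / w)) :
    f ∈ partialFractions (1 / ·) S p G :=
  ⟨A, B, Γ, fun w hw => by rw [hf w hw, mul_one_div]⟩

theorem div_sub_one_div_eq_mul_div {w : 𝕜} (hw : w ≠ 0) (c q : 𝕜) :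
    c / (q - 1 / w) = c * w / (q * w - 1) := by
  rw [← div_div_eq_mul_div, sub_div, mul_div_cancel_right₀ q hw]

end Field

theorem continuousAt_finsetSum {α M : Type*} [TopologicalSpace α] [AddCommMonoid M]
    [TopologicalSpace M] [ContinuousAdd M] {S : Finset ι} {f : ι → α → M} {z : α}
    (hf : ∀ j ∈ S, ContinuousAt (f j) z) : ContinuousAt (fun w => ∑ j ∈ S, f j w) z :=
  tendsto_finsetSum S hf

section NormedField

variable [NontriviallyNormedField 𝕜] {S : Finset ι}

theorem continuousAt_affine_add_sum_div_sub (A B : 𝕜) (Γ p : ι → 𝕜) {z : 𝕜}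
    (hz : ∀ j ∈ S, p j ≠ z) :
    ContinuousAt (fun w => A * w + B + ∑ j ∈ S, Γ j / (p j - w)) z :=
  ((continuousAt_const.mul continuousAt_id).add continuousAt_const).add <|
    continuousAt_finsetSum fun j hj =>
      continuousAt_const.div (continuousAt_const.sub continuousAt_id) (sub_ne_zero.2 (hz j hj))

theorem continuousAt_sum_mul_div_mul_sub_one (Γ q : ι → 𝕜) {z : 𝕜}
    (hz : ∀ j ∈ S, q j * z ≠ 1) :
    ContinuousAt (fun w => ∑ j ∈ S, Γ j * w / (q j * w - 1)) z :=
  continuousAt_finsetSum fun j hj => by fun_prop (disch := exact sub_ne_zero.2 (hz j hj))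

/-- Along `𝓝[≠] z`, `ℓ g` tends both to `ℓ z * g z = 0` and to `k z + ℓ z * h z = k z`. -/
theorem eq_zero_of_eventually_eq_div_add {g k ℓ h : 𝕜 → 𝕜} {z : 𝕜} (hg : ContinuousAt g z)
    (hk : ContinuousAt k z) (hℓ : ContinuousAt ℓ z) (hh : ContinuousAt h z) (hℓz : ℓ z = 0)
    (hgkh : ∀ᶠ w in 𝓝[≠] z, ℓ w ≠ 0 ∧ g w = k w / ℓ w + h w) : k z = 0 := by
  have hto0 : Tendsto (fun w => ℓ w * g w) (𝓝[≠] z) (𝓝 0) := by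
    simpa [hℓz] using (hℓ.tendsto.mul hg.tendsto).mono_left nhdsWithin_le_nhds
  have htok : Tendsto (fun w => k w + ℓ w * h w) (𝓝[≠] z) (𝓝 (k z)) := by
    simpa [hℓz] using (hk.tendsto.add (hℓ.tendsto.mul hh.tendsto)).mono_left nhdsWithin_le_nhds
  refine tendsto_nhds_unique (htok.congr' ?_) hto0
  filter_upwards [hgkh] with w ⟨hℓw, hgw⟩
  rw [hgw]
  field_simp

theorem eq_zero_of_continuousAt_eq_div_add_sum {q Γ : ι → 𝕜} {A B : 𝕜} {g : 𝕜 → 𝕜} {G : Set 𝕜}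
    (hq : ∀ j ∈ S, q j ≠ 0) (hq_inj : Set.InjOn q S) (hG : Gᶜ.Finite)
    (hg0 : ContinuousAt g 0) (hgq : ∀ j ∈ S, ContinuousAt g (q j)⁻¹)
    (hgG : ∀ w ∈ G, w ≠ 0 → g w = A / w + B + ∑ j ∈ S, Γ j * w / (q j * w - 1)) :
    A = 0 ∧ ∀ j ∈ S, Γ j = 0 := by
  classical
  have hev : ∀ z, ∀ᶠ w in 𝓝[≠] z, w ∈ G ∧ w ≠ 0 := fun z =>
    ((eventually_cofinite.2 hG : ∀ᶠ w in cofinite, w ∈ G).and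
      (eventually_cofinite_ne 0)).filter_mono (nhdsNE_le_cofinite z)
  refine ⟨eq_zero_of_eventually_eq_div_add (k := fun _ => A) (ℓ := id)
    (h := fun w => B + ∑ j ∈ S, Γ j * w / (q j * w - 1)) hg0 continuousAt_const continuousAt_id
    (continuousAt_const.add (continuousAt_sum_mul_div_mul_sub_one Γ q fun j _ => by simp)) rfl ?_,
    fun j hj => ?_⟩
  · filter_upwards [hev 0] with w ⟨hw, hw0⟩
    exact ⟨hw0, by rw [hgG w hw hw0, add_assoc]; rfl⟩
  have hqj := hq j hj
  have hrest : ContinuousAt (fun w => A / w + B + ∑ i ∈ S.erase j, Γ i * w / (q i * w - 1))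
      (q j)⁻¹ := by
    refine ((continuousAt_const.div continuousAt_id (inv_ne_zero hqj)).add
      continuousAt_const).add (continuousAt_sum_mul_div_mul_sub_one Γ q fun i hi h => ?_)
    exact ne_of_mem_erase hi (hq_inj (mem_of_mem_erase hi) hj ((mul_inv_eq_one₀ hqj).1 h))
  have hres := eq_zero_of_eventually_eq_div_add (k := fun w => Γ j * w)
    (ℓ := fun w => q j * w - 1) (hgq j hj) (by fun_prop) (by fun_prop) hrest (by simp [hqj]) ?_
  · simpa [hqj] using hres
  filter_upwards [hev _, self_mem_nhdsWithin] with w ⟨hw, hw0⟩ hwq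
  refine ⟨fun h => hwq (eq_inv_of_mul_eq_one_right (sub_eq_zero.1 h)), ?_⟩
  rw [hgG w hw hw0, ← add_sum_erase S _ hj]
  ring

theorem exists_eqOn_const_of_mem_partialFractions {p q : ι → 𝕜} {G : Set 𝕜} {f : 𝕜 → 𝕜}
    (hp : ∀ j ∈ S, p j ≠ 0) (hq : ∀ j ∈ S, q j ≠ 0) (hq_inj : Set.InjOn q S)
    (hpq : ∀ i ∈ S, ∀ j ∈ S, p i * q j ≠ 1) (hG : Gᶜ.Finite)
    (h₁ : f ∈ partialFractions id S p G) (h₂ : f ∈ partialFractions (1 / ·) S q G) :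
    ∃ c, ∀ w ∈ G, f w = c := by
  obtain ⟨A₁, B₁, Γ₁, hf₁⟩ := h₁
  obtain ⟨A, B, Γ, hf₂⟩ := h₂
  have hg : ∀ {z}, (∀ j ∈ S, p j ≠ z) → ContinuousAt _ z :=
    continuousAt_affine_add_sum_div_sub A₁ B₁ Γ₁ p
  obtain ⟨hA, hΓ⟩ := eq_zero_of_continuousAt_eq_div_add_sum (A := A) (B := B) (Γ := Γ) hq hq_inj hG
    (hg hp)
    (fun j hj => hg fun i hi h => hpq i hi j hj (by rw [h, inv_mul_cancel₀ (hq j hj)]))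
    (fun w hw hw0 => (hf₁ w hw).symm.trans <| by
      rw [hf₂ w hw]
      simp only [mul_one_div, div_sub_one_div_eq_mul_div hw0])
  refine ⟨B, fun w hw => ?_⟩
  rw [hf₂ w hw, hA, sum_eq_zero fun j hj => by rw [hΓ j hj, zero_div]]
  ring

end NormedField

end PartialFractions

theorem mul_mem_partialFractions_id {S : Finset ℕ} {a p : ℕ → ℂ} {r : ℂ} {G : Set ℂ}
    {Zw : ℂ → ℂ} (ha : ∑ j ∈ S, a j = 0) (hG : ∀ w ∈ G, ∀ j ∈ S, w ≠ p j)
    (hZw : ∀ w, Zw w = r + ∑ j ∈ S, a j / (w - p j)) :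
    (fun w => w * Zw w) ∈ partialFractions id S p G := by
  refine ⟨r, 0, fun j => -(a j * p j), fun w hw => ?_⟩
  dsimp only [id]
  have hterm : ∀ j ∈ S, w * (a j / (w - p j)) = a j + -(a j * p j) / (p j - w) := by
    intro j hj
    have : w - p j ≠ 0 := sub_ne_zero.2 (hG w hw j hj)
    have : p j - w ≠ 0 := sub_ne_zero.2 (hG w hw j hj).symm
    field_simp
    ring
  rw [hZw, mul_add, mul_sum, sum_congr rfl hterm, sum_add_distrib, ha]
  ring

theorem mul_mem_partialFractions_inv {S : Finset ℕ} {abar q : ℕ → ℂ} {r : ℂ} {G : Set ℂ}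
    {Zbw : ℂ → ℂ} (hab : ∑ j ∈ S, abar j = 0) (hG0 : ∀ w ∈ G, w ≠ 0)
    (hG : ∀ w ∈ G, ∀ j ∈ S, w ≠ (q j)⁻¹)
    (hZbw : ∀ w, Zbw w = -r / w ^ 2 + ∑ j ∈ S, abar j / (w ^ 2 * (q j - 1 / w))) :
    (fun w => w * Zbw w) ∈ partialFractions (1 / ·) S q G := by
  refine ⟨-r, 0, fun j => abar j * q j, fun w hw => ?_⟩
  have hw0 := hG0 w hw
  dsimp only
  have hterm : ∀ j ∈ S, w * (abar j / (w ^ 2 * (q j - 1 / w))) =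
      -abar j + abar j * q j / (q j - 1 / w) := by
    intro j hj
    have hX : q j - 1 / w ≠ 0 := fun h => hG w hw j hj (by rw [sub_eq_zero.1 h, one_div, inv_inv])
    generalize q j = qj at hX ⊢
    obtain ⟨X, rfl⟩ : ∃ X, qj = X + 1 / w := ⟨qj - 1 / w, by ring⟩
    rw [add_sub_cancel_right] at hX ⊢
    field_simp
    ring
  rw [hZbw, mul_add, mul_sum, sum_congr rfl hterm, sum_add_distrib, sum_neg_distrib, hab]
  field_simp
  ring

theorem stringBracket_mem_partialFractions_id {S : Finset ℕ} {a abar p q q' : ℕ → ℂ}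
    {r r' ubar' : ℂ} {G : Set ℂ} {Zw Zx Zbw Zbx : ℂ → ℂ}
    (ha : ∑ j ∈ S, a j = 0) (hab : ∑ j ∈ S, abar j = 0) (hG : ∀ w ∈ G, ∀ j ∈ S, w ≠ p j)
    (hZw : ∀ w, Zw w = r + ∑ j ∈ S, a j / (w - p j))
    (hZbw : ∀ w, Zbw w = -r / w ^ 2 + ∑ j ∈ S, abar j / (w ^ 2 * (q j - 1 / w)))
    (hZbx : ∀ w, Zbx w = r' / w + ubar' + ∑ j ∈ S, abar j * q' j / (q j - 1 / w))
    (h0 : (fun w => w * (-r / w ^ 2) * Zx w - w * (r' / w + ubar' / 2) * Zw w)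
      ∈ partialFractions id S p G)
    (h1 : ∀ i ∈ S, (fun w => w * (1 / (w ^ 2 * (q i - 1 / w))) * Zx w
        - w * (q' i / (q i - 1 / w) + 1 / 2 * (r' / r - q' i / q i)) * Zw w)
      ∈ partialFractions id S p G) :
    (fun w => w * Zw w * Zbx w - w * Zx w * Zbw w) ∈ partialFractions id S p G := by
  refine mem_partialFractions_of_eqOn (fun w _ => ?_)
    (add_mem (add_mem (neg_mem h0) (sum_mem fun i hi => Submodule.smul_mem _ (-abar i) (h1 i hi)))
      (Submodule.smul_mem _ (ubar' / 2 + 1 / 2 * ∑ i ∈ S, abar i * (q' i / q i))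
        (mul_mem_partialFractions_id ha hG hZw)))
  simp only [Pi.add_apply, Pi.neg_apply, Finset.sum_apply, Pi.smul_apply, smul_eq_mul]
  have hterm : ∀ i ∈ S, -abar i * (w * (1 / (w ^ 2 * (q i - 1 / w))) * Zx w
        - w * (q' i / (q i - 1 / w) + 1 / 2 * (r' / r - q' i / q i)) * Zw w)
      = -(w * Zx w) * (abar i / (w ^ 2 * (q i - 1 / w)))
        + w * Zw w * (abar i * q' i / (q i - 1 / w)) + w * Zw w * (r' / r) / 2 * abar i
        - w * Zw w / 2 * (abar i * (q' i / q i)) := fun i _ => by ring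
  rw [sum_congr rfl hterm, sum_sub_distrib, sum_add_distrib, sum_add_distrib, ← mul_sum, ← mul_sum,
    ← mul_sum, ← mul_sum, hab, hZbw, hZbx]
  ring

theorem stringBracket_mem_partialFractions_inv {S : Finset ℕ} {a abar p p' q : ℕ → ℂ}
    {r r' u' : ℂ} {G : Set ℂ} {Zw Zx Zbw Zbx : ℂ → ℂ}
    (ha : ∑ j ∈ S, a j = 0) (hab : ∑ j ∈ S, abar j = 0) (hG0 : ∀ w ∈ G, w ≠ 0)
    (hG : ∀ w ∈ G, ∀ j ∈ S, w ≠ (q j)⁻¹)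
    (hZw : ∀ w, Zw w = r + ∑ j ∈ S, a j / (w - p j))
    (hZx : ∀ w, Zx w = r' * w + u' + ∑ j ∈ S, a j * p' j / (p j - w))
    (hZbw : ∀ w, Zbw w = -r / w ^ 2 + ∑ j ∈ S, abar j / (w ^ 2 * (q j - 1 / w)))
    (h0 : (fun w => w * r * Zbx w - w * (r' * w + u' / 2) * Zbw w)
      ∈ partialFractions (1 / ·) S q G)
    (h1 : ∀ i ∈ S, (fun w => w * (1 / (w - p i)) * Zbx w
        - w * (p' i / (p i - w) + 1 / 2 * (r' / r - p' i / p i)) * Zbw w)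
      ∈ partialFractions (1 / ·) S q G) :
    (fun w => w * Zw w * Zbx w - w * Zx w * Zbw w) ∈ partialFractions (1 / ·) S q G := by
  refine mem_partialFractions_of_eqOn (fun w _ => ?_)
    (add_mem (add_mem h0 (sum_mem fun i hi => Submodule.smul_mem _ (a i) (h1 i hi)))
      (Submodule.smul_mem _ (-(u' / 2 + 1 / 2 * ∑ i ∈ S, a i * (p' i / p i)))
        (mul_mem_partialFractions_inv hab hG0 hG hZbw)))
  simp only [Pi.add_apply, Finset.sum_apply, Pi.smul_apply, smul_eq_mul]
  have hterm : ∀ i ∈ S, a i * (w * (1 / (w - p i)) * Zbx w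
        - w * (p' i / (p i - w) + 1 / 2 * (r' / r - p' i / p i)) * Zbw w)
      = w * Zbx w * (a i / (w - p i)) - w * Zbw w * (a i * p' i / (p i - w))
        - w * Zbw w * (r' / r) / 2 * a i + w * Zbw w / 2 * (a i * (p' i / p i)) :=
    fun i _ => by ring
  rw [sum_congr rfl hterm, sum_add_distrib, sum_sub_distrib, sum_sub_distrib, ← mul_sum,
    ← mul_sum, ← mul_sum, ← mul_sum, ha, hZw, hZx]
  ring

def admissible (S : Finset ℕ) (p q : ℕ → ℂ) : Set ℂ :=
  {w | w ≠ 0 ∧ (∀ j ∈ S, w ≠ p j) ∧ ∀ j ∈ S, w ≠ (q j)⁻¹}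

theorem admissible_compl_finite (S : Finset ℕ) (p q : ℕ → ℂ) : (admissible S p q)ᶜ.Finite := by
  refine ((S.image p ∪ S.image fun j => (q j)⁻¹).finite_toSet.insert 0).subset fun w hw => ?_
  simp only [admissible, Set.mem_compl_iff, Set.mem_ofPred_eq, not_and_or, not_forall,
    not_not] at hw
  simp only [coe_union, coe_image, Set.mem_insert_iff, Set.mem_union, Set.mem_image, mem_coe]
  rcases hw with hw | ⟨j, hj, rfl⟩ | ⟨j, hj, rfl⟩
  exacts [Or.inl hw, Or.inr (Or.inl ⟨j, hj, rfl⟩), Or.inr (Or.inr ⟨j, hj, rfl⟩)]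

theorem tangency_implies_bracket_constant_general
    (n : ℕ) (a abar : ℕ → ℂ)
    (r : ℝ → ℂ) (W Wb : ℕ → ℝ → ℂ)
    (r' u' ubar' : ℝ → ℂ) (W' Wb' : ℕ → ℝ → ℂ)
    (hasum : ∑ i ∈ Finset.Icc 1 (n + 1), a i = 0)
    (habarsum : ∑ i ∈ Finset.Icc 1 (n + 1), abar i = 0)
    (hW0 : ∀ i ∈ Finset.Icc 1 (n + 1), ∀ x : ℝ, W i x ≠ 0)
    (hWb0 : ∀ i ∈ Finset.Icc 1 (n + 1), ∀ x : ℝ, Wb i x ≠ 0)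
    (hWbdist : ∀ i ∈ Finset.Icc 1 (n + 1), ∀ j ∈ Finset.Icc 1 (n + 1), i ≠ j →
      ∀ x : ℝ, Wb i x ≠ Wb j x)
    (hWWb : ∀ i ∈ Finset.Icc 1 (n + 1), ∀ j ∈ Finset.Icc 1 (n + 1),
      ∀ x : ℝ, W i x * Wb j x ≠ 1)
    -- the rational (in w) partial derivatives of z and z̄
    (Zw Zx Zbw Zbx : ℝ → ℂ → ℂ)
    (hZw : ∀ x w, Zw x w = r x + ∑ i ∈ Finset.Icc 1 (n + 1), a i / (w - W i x))
    (hZx : ∀ x w, Zx x w =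
      r' x * w + u' x + ∑ i ∈ Finset.Icc 1 (n + 1), a i * W' i x / (W i x - w))
    (hZbw : ∀ x w, Zbw x w =
      - r x / w ^ 2 + ∑ i ∈ Finset.Icc 1 (n + 1), abar i / (w ^ 2 * (Wb i x - 1 / w)))
    (hZbx : ∀ x w, Zbx x w =
      r' x / w + ubar' x + ∑ i ∈ Finset.Icc 1 (n + 1), abar i * Wb' i x / (Wb i x - 1 / w))
    -- the string equation
    -- tangency of the τ̄₀-flow: the bracket {𝓗̄₀, z} with Ḡ⁰_w = −r/w², Ḡ⁰_x = r′/w + ū′/2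
    (h0 : ∃ α β : ℝ → ℂ, ∃ γ : ℕ → ℝ → ℂ, ∀ (x : ℝ) (w : ℂ), w ≠ 0 →
      (∀ j ∈ Finset.Icc 1 (n + 1), w ≠ W j x) →
      (∀ j ∈ Finset.Icc 1 (n + 1), w ≠ (Wb j x)⁻¹) →
      w * (- r x / w ^ 2) * Zx x w - w * (r' x / w + ubar' x / 2) * Zw x w
        = α x * w + β x + ∑ j ∈ Finset.Icc 1 (n + 1), γ j x / (W j x - w))
    -- tangency of the τ̄ᵢ-flows, i = 1..n+1
    (h1 : ∀ i ∈ Finset.Icc 1 (n + 1), ∃ α β : ℝ → ℂ, ∃ γ : ℕ → ℝ → ℂ,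
      ∀ (x : ℝ) (w : ℂ), w ≠ 0 →
      (∀ j ∈ Finset.Icc 1 (n + 1), w ≠ W j x) →
      (∀ j ∈ Finset.Icc 1 (n + 1), w ≠ (Wb j x)⁻¹) →
      w * (1 / (w ^ 2 * (Wb i x - 1 / w))) * Zx x w
        - w * (Wb' i x / (Wb i x - 1 / w)
            + (1 / 2) * (r' x / r x - Wb' i x / Wb i x)) * Zw x w
        = α x * w + β x + ∑ j ∈ Finset.Icc 1 (n + 1), γ j x / (W j x - w))
    -- tangency of the τ₀-flow: the bracket {𝓗₀, z̄} with F⁰_w = r, F⁰_x = r′w + u′/2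
    (hb0 : ∃ α β : ℝ → ℂ, ∃ γ : ℕ → ℝ → ℂ, ∀ (x : ℝ) (w : ℂ), w ≠ 0 →
      (∀ j ∈ Finset.Icc 1 (n + 1), w ≠ W j x) →
      (∀ j ∈ Finset.Icc 1 (n + 1), w ≠ (Wb j x)⁻¹) →
      w * r x * Zbx x w - w * (r' x * w + u' x / 2) * Zbw x w
        = α x / w + β x + ∑ j ∈ Finset.Icc 1 (n + 1), γ j x / (Wb j x - 1 / w))
    -- tangency of the τᵢ-flows, i = 1..n+1
    (hb1 : ∀ i ∈ Finset.Icc 1 (n + 1), ∃ α β : ℝ → ℂ, ∃ γ : ℕ → ℝ → ℂ,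
      ∀ (x : ℝ) (w : ℂ), w ≠ 0 →
      (∀ j ∈ Finset.Icc 1 (n + 1), w ≠ W j x) →
      (∀ j ∈ Finset.Icc 1 (n + 1), w ≠ (Wb j x)⁻¹) →
      w * (1 / (w - W i x)) * Zbx x w
        - w * (W' i x / (W i x - w)
            + (1 / 2) * (r' x / r x - W' i x / W i x)) * Zbw x w
        = α x / w + β x + ∑ j ∈ Finset.Icc 1 (n + 1), γ j x / (Wb j x - 1 / w)) :
    ∀ x : ℝ, ∃ c : ℂ, ∀ w : ℂ, w ≠ 0 →
      (∀ j ∈ Finset.Icc 1 (n + 1), w ≠ W j x) →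
      (∀ j ∈ Finset.Icc 1 (n + 1), w ≠ (Wb j x)⁻¹) →
      w * Zw x w * Zbx x w - w * Zx x w * Zbw x w = c := by
  intro x
  have hτbar := stringBracket_mem_partialFractions_id (G := admissible _ (W · x) (Wb · x))
    hasum habarsum (fun w hw => hw.2.1) (hZw x) (hZbw x) (hZbx x)
    (let ⟨α, β, γ, h⟩ := h0; mem_partialFractions_id_of_eq fun w hw => h x w hw.1 hw.2.1 hw.2.2)
    (fun i hi => let ⟨α, β, γ, h⟩ := h1 i hi
      mem_partialFractions_id_of_eq fun w hw => h x w hw.1 hw.2.1 hw.2.2)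
  have hτ := stringBracket_mem_partialFractions_inv (G := admissible _ (W · x) (Wb · x))
    hasum habarsum (fun w hw => hw.1) (fun w hw => hw.2.2) (hZw x) (hZx x) (hZbw x)
    (let ⟨α, β, γ, h⟩ := hb0; mem_partialFractions_inv_of_eq fun w hw => h x w hw.1 hw.2.1 hw.2.2)
    (fun i hi => let ⟨α, β, γ, h⟩ := hb1 i hi
      mem_partialFractions_inv_of_eq fun w hw => h x w hw.1 hw.2.1 hw.2.2)
  obtain ⟨c, hc⟩ := exists_eqOn_const_of_mem_partialFractions (hW0 · · x) (hWb0 · · x)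
    (fun i hi j hj h => by_contra fun hij => hWbdist i hi j hj hij x h)
    (fun i hi j hj => hWWb i hi j hj x) (admissible_compl_finite _ _ _) hτbar hτ
  exact ⟨c, fun w hw0 hW hWb => hc w ⟨hw0, hW, hWb⟩⟩

/-- if all the logarithmic flows are tangent to the manifold of
logarithmic reductions (i.e. all brackets `{𝓗̄_i, z}` and `{𝓗_i, z̄}`,
`i ∈ {0,…,n+1}`, have the appropriate partial-fraction form), then for every `x`
the string bracket `w·Z_w·Z̄_x − w·Z_x·Z̄_w` is independent of `w`. -/
theorem tangency_implies_bracket_constant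
    (n : ℕ) (a abar : ℕ → ℂ)
    (r u ubar : ℝ → ℂ) (W Wb : ℕ → ℝ → ℂ)
    (r' u' ubar' : ℝ → ℂ) (W' Wb' : ℕ → ℝ → ℂ)
    (ha : ∀ i ∈ Finset.Icc 1 (n + 1), a i ≠ 0)
    (habar : ∀ i ∈ Finset.Icc 1 (n + 1), abar i ≠ 0)
    (hasum : ∑ i ∈ Finset.Icc 1 (n + 1), a i = 0)
    (habarsum : ∑ i ∈ Finset.Icc 1 (n + 1), abar i = 0)
    (hr0 : ∀ x, r x ≠ 0)
    (hW0 : ∀ i ∈ Finset.Icc 1 (n + 1), ∀ x : ℝ, W i x ≠ 0)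
    (hWb0 : ∀ i ∈ Finset.Icc 1 (n + 1), ∀ x : ℝ, Wb i x ≠ 0)
    (hWdist : ∀ i ∈ Finset.Icc 1 (n + 1), ∀ j ∈ Finset.Icc 1 (n + 1), i ≠ j →
      ∀ x : ℝ, W i x ≠ W j x)
    (hWbdist : ∀ i ∈ Finset.Icc 1 (n + 1), ∀ j ∈ Finset.Icc 1 (n + 1), i ≠ j →
      ∀ x : ℝ, Wb i x ≠ Wb j x)
    (hWWb : ∀ i ∈ Finset.Icc 1 (n + 1), ∀ j ∈ Finset.Icc 1 (n + 1),
      ∀ x : ℝ, W i x * Wb j x ≠ 1)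
    (hdr : ∀ x, HasDerivAt r (r' x) x)
    (hdu : ∀ x, HasDerivAt u (u' x) x)
    (hdubar : ∀ x, HasDerivAt ubar (ubar' x) x)
    (hdW : ∀ i ∈ Finset.Icc 1 (n + 1), ∀ x, HasDerivAt (W i) (W' i x) x)
    (hdWb : ∀ i ∈ Finset.Icc 1 (n + 1), ∀ x, HasDerivAt (Wb i) (Wb' i x) x)
    -- the rational (in w) partial derivatives of z and z̄
    (Zw Zx Zbw Zbx : ℝ → ℂ → ℂ)
    (hZw : ∀ x w, Zw x w = r x + ∑ i ∈ Finset.Icc 1 (n + 1), a i / (w - W i x))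
    (hZx : ∀ x w, Zx x w =
      r' x * w + u' x + ∑ i ∈ Finset.Icc 1 (n + 1), a i * W' i x / (W i x - w))
    (hZbw : ∀ x w, Zbw x w =
      - r x / w ^ 2 + ∑ i ∈ Finset.Icc 1 (n + 1), abar i / (w ^ 2 * (Wb i x - 1 / w)))
    (hZbx : ∀ x w, Zbx x w =
      r' x / w + ubar' x + ∑ i ∈ Finset.Icc 1 (n + 1), abar i * Wb' i x / (Wb i x - 1 / w))
    -- the string equation
    -- tangency of the τ̄₀-flow: the bracket {𝓗̄₀, z} with Ḡ⁰_w = −r/w², Ḡ⁰_x = r′/w + ū′/2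
    (h0 : ∃ α β : ℝ → ℂ, ∃ γ : ℕ → ℝ → ℂ, ∀ (x : ℝ) (w : ℂ), w ≠ 0 →
      (∀ j ∈ Finset.Icc 1 (n + 1), w ≠ W j x) →
      (∀ j ∈ Finset.Icc 1 (n + 1), w ≠ (Wb j x)⁻¹) →
      w * (- r x / w ^ 2) * Zx x w - w * (r' x / w + ubar' x / 2) * Zw x w
        = α x * w + β x + ∑ j ∈ Finset.Icc 1 (n + 1), γ j x / (W j x - w))
    -- tangency of the τ̄ᵢ-flows, i = 1..n+1
    (h1 : ∀ i ∈ Finset.Icc 1 (n + 1), ∃ α β : ℝ → ℂ, ∃ γ : ℕ → ℝ → ℂ,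
      ∀ (x : ℝ) (w : ℂ), w ≠ 0 →
      (∀ j ∈ Finset.Icc 1 (n + 1), w ≠ W j x) →
      (∀ j ∈ Finset.Icc 1 (n + 1), w ≠ (Wb j x)⁻¹) →
      w * (1 / (w ^ 2 * (Wb i x - 1 / w))) * Zx x w
        - w * (Wb' i x / (Wb i x - 1 / w)
            + (1 / 2) * (r' x / r x - Wb' i x / Wb i x)) * Zw x w
        = α x * w + β x + ∑ j ∈ Finset.Icc 1 (n + 1), γ j x / (W j x - w))
    -- tangency of the τ₀-flow: the bracket {𝓗₀, z̄} with F⁰_w = r, F⁰_x = r′w + u′/2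
    (hb0 : ∃ α β : ℝ → ℂ, ∃ γ : ℕ → ℝ → ℂ, ∀ (x : ℝ) (w : ℂ), w ≠ 0 →
      (∀ j ∈ Finset.Icc 1 (n + 1), w ≠ W j x) →
      (∀ j ∈ Finset.Icc 1 (n + 1), w ≠ (Wb j x)⁻¹) →
      w * r x * Zbx x w - w * (r' x * w + u' x / 2) * Zbw x w
        = α x / w + β x + ∑ j ∈ Finset.Icc 1 (n + 1), γ j x / (Wb j x - 1 / w))
    -- tangency of the τᵢ-flows, i = 1..n+1
    (hb1 : ∀ i ∈ Finset.Icc 1 (n + 1), ∃ α β : ℝ → ℂ, ∃ γ : ℕ → ℝ → ℂ,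
      ∀ (x : ℝ) (w : ℂ), w ≠ 0 →
      (∀ j ∈ Finset.Icc 1 (n + 1), w ≠ W j x) →
      (∀ j ∈ Finset.Icc 1 (n + 1), w ≠ (Wb j x)⁻¹) →
      w * (1 / (w - W i x)) * Zbx x w
        - w * (W' i x / (W i x - w)
            + (1 / 2) * (r' x / r x - W' i x / W i x)) * Zbw x w
        = α x / w + β x + ∑ j ∈ Finset.Icc 1 (n + 1), γ j x / (Wb j x - 1 / w)) :
    ∀ x : ℝ, ∃ c : ℂ, ∀ w : ℂ, w ≠ 0 →
      (∀ j ∈ Finset.Icc 1 (n + 1), w ≠ W j x) →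
      (∀ j ∈ Finset.Icc 1 (n + 1), w ≠ (Wb j x)⁻¹) →
      w * Zw x w * Zbx x w - w * Zx x w * Zbw x w = c :=
  tangency_implies_bracket_constant_general n a abar r W Wb r' u' ubar' W' Wb' hasum habarsum hW0
    hWb0 hWbdist hWWb Zw Zx Zbw Zbx hZw hZx hZbw hZbx h0 h1 hb0 hb1
end
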